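/- arXiv:math/0601386 — 4 statements merged into one kernel-verified Lean document; each statement's English description precedes it below -/
import Mathlib

section
/- Fix 1 ≤ k ≤ n and a sign γ, set σ = u_{k−1}⊗∂^γu_1⊗u_{n−k}, and let A_q ∈ νI^n (0 ≤ q ≤ n−1) be the inductively defined composite elements built from the A_q^β. Then A_{n−1} = d_{n−1}^{(−1)^{k−1}γ}⟨u_n⟩. -/
namespace CubicalNerve

/-- Signs: `true` is `+`, `false` is `−`, as an integer `±1`. -/
def sgn (α : Bool) : ℤ := if α then 1 else -1

/-- Sign twisting: `twist α m` is the sign `(−1)^m α`. -/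
def twist (α : Bool) (m : ℕ) : Bool := if Even m then α else !α

/-- A standard basis element of the chain complex `Iⁿ`: the factor at position `i` is
`u₁` when the value is `none`, and `∂^α u₁` when the value is `some α`. -/
abbrev Cell (n : ℕ) := Fin n → Option Bool

/-- The dimension of a standard basis element: the number of `u₁` factors. -/
def Cell.dim {n : ℕ} (σ : Cell n) : ℕ := (Finset.univ.filter fun i => σ i = none).card

/-- The number of `u₁` factors strictly before position `i`. -/
def Cell.below {n : ℕ} (σ : Cell n) (i : Fin n) : ℕ :=
  (Finset.univ.filter fun j => j < i ∧ σ j = none).card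

/-- The number of `∂^± u₁` factors at positions `≤ j`. -/
def Cell.sLe {n : ℕ} (σ : Cell n) (j : Fin n) : ℕ :=
  (Finset.univ.filter fun i => i ≤ j ∧ σ i ≠ none).card

/-- The chain groups of `Iⁿ` (all degrees taken together): the free abelian group
on the standard basis elements. -/
abbrev Chain (n : ℕ) := Cell n →₀ ℤ

/-- The boundary of a standard basis element (tensor-product boundary formula). -/
noncomputable def bdCell {n : ℕ} (σ : Cell n) : Chain n :=
  ∑ i ∈ Finset.univ.filter (fun i => σ i = none),
    ((-1 : ℤ) ^ σ.below i) •
      (Finsupp.single (Function.update σ i (some true)) 1 -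
        Finsupp.single (Function.update σ i (some false)) 1)

/-- The boundary operator of `Iⁿ`. -/
noncomputable def bd {n : ℕ} (c : Chain n) : Chain n := c.sum fun σ z => z • bdCell σ

/-- The positive part of a chain. -/
noncomputable def posPart {n : ℕ} (c : Chain n) : Chain n :=
  Finsupp.mapRange (fun z => max z 0) (by simp) c

/-- The negative part of a chain. -/
noncomputable def negPart {n : ℕ} (c : Chain n) : Chain n :=
  Finsupp.mapRange (fun z => max (-z) 0) (by simp) c

/-- `∂^α`: the positive (resp. negative) part of the boundary. -/
noncomputable def bdp {n : ℕ} (α : Bool) (c : Chain n) : Chain n :=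
  if α then posPart (bd c) else negPart (bd c)

/-- The atom `⟨σ⟩`: `atom σ α q` is the chain `⟨σ⟩_q^α = (∂^α)^{p−q} σ` for `q ≤ p = dim σ`,
and `0` for `q > p`. -/
noncomputable def atom {n : ℕ} (σ : Cell n) (α : Bool) (q : ℕ) : Chain n :=
  if q ≤ σ.dim then (bdp α)^[σ.dim - q] (Finsupp.single σ 1) else 0

/-- The augmentation (extended by zero on positive-degree chains). -/
noncomputable def aug {n : ℕ} (c : Chain n) : ℤ := c.sum fun σ z => if σ.dim = 0 then z else 0

/-- The top basis element `u_n = u₁ ⊗ ⋯ ⊗ u₁` of `Iⁿ`. -/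
def un (n : ℕ) : Cell n := fun _ => none

/-- The basis element `u_{k-1} ⊗ ∂^γ u₁ ⊗ u_{n-k}` (here `k : Fin n` is `k−1` in the
1-indexed notation of the paper). -/
def kcell {n : ℕ} (k : Fin n) (γ : Bool) : Cell n := Function.update (un n) k (some γ)

/-- Membership in `ν Iⁿ` for a double sequence `x`, where `x i α` is `x_i^α`:
each `x_i^α` is an `i`-chain which is a nonnegative sum of standard basis elements,
`ε x_0^- = ε x_0^+ = 1`, and `x_i^+ − x_i^− = ∂ x_{i+1}^- = ∂ x_{i+1}^+`. -/
def IsNu {n : ℕ} (x : ℕ → Bool → Chain n) : Prop :=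
  (∀ i α, ∀ σ ∈ (x i α).support, Cell.dim σ = i) ∧
  (∀ i α, 0 ≤ x i α) ∧
  (∀ α, aug (x 0 α) = 1) ∧
  (∀ i α, x i true - x i false = bd (x (i + 1) α))

/-- The double sequence of an atom. -/
noncomputable def atomSeq {n : ℕ} (σ : Cell n) : ℕ → Bool → Chain n := fun i α => atom σ α i

/-- The identity operation `d_p^α` on double sequences. -/
noncomputable def dOp {n : ℕ} (p : ℕ) (α : Bool) (x : ℕ → Bool → Chain n) : ℕ → Bool → Chain n :=
  fun i β => if i < p then x i β else if i = p then x p α else 0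

/-- The composition `x #_p y = x − d_p⁺ x + y`, formed termwise. -/
noncomputable def comp {n : ℕ} (p : ℕ) (x y : ℕ → Bool → Chain n) : ℕ → Bool → Chain n :=
  fun i β => x i β - dOp p true x i β + y i β

/-- Insertion of a new tensor factor at (0-indexed) position `i` (clamped into range). -/
def insertCell {m : ℕ} (i : ℕ) (v : Option Bool) (σ : Cell m) : Cell (m + 1) :=
  Fin.insertNth ⟨min i m, Nat.lt_succ_of_le (min_le_right i m)⟩ v σ

/-- The face chain map `∂̌_i^α : Iᵐ → Iᵐ⁺¹` (with `i` 1-indexed, `1 ≤ i ≤ m+1`),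
given on standard basis elements by `x ⊗ y ↦ x ⊗ ∂^α u₁ ⊗ y`. -/
noncomputable def faceL (m : ℕ) (i : ℕ) (α : Bool) : Chain m →ₗ[ℤ] Chain (m + 1) :=
  Finsupp.lmapDomain ℤ ℤ (insertCell (i - 1) (some α))

/-- `IsFaceComposite F` means that `F` is a composite of face chain maps `∂̌_i^α`. -/
inductive IsFaceComposite : ∀ {m n : ℕ}, (Chain m →ₗ[ℤ] Chain n) → Prop
  | id (m : ℕ) : IsFaceComposite (LinearMap.id : Chain m →ₗ[ℤ] Chain m)
  | step {m d : ℕ} {F : Chain m →ₗ[ℤ] Chain d} (i : ℕ) (α : Bool)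
      (h1 : 1 ≤ i) (h2 : i ≤ d + 1) :
      IsFaceComposite F → IsFaceComposite ((faceL d i α).comp F)

/-- `stdC m p ι a` is the composite `∂̌_{ι 0}^{a 0} ∘ ⋯ ∘ ∂̌_{ι (p-1)}^{a (p-1)} : Iᵐ → Iᵐ⁺ᵖ`
(so `∂̌_{ι (p-1)}^{a (p-1)}` is applied first). -/
noncomputable def stdC (m : ℕ) :
    (p : ℕ) → (Fin p → ℕ) → (Fin p → Bool) → (Chain m →ₗ[ℤ] Chain (m + p))
  | 0, _, _ => LinearMap.id
  | p + 1, ι, a =>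
      (faceL (m + p) (ι 0) (a 0)).comp (stdC m p (fun r => ι r.succ) (fun r => a r.succ))

/-- Transport of chains along an equality of dimensions. -/
noncomputable def chainCongr {a b : ℕ} (h : a = b) : Chain a ≃ₗ[ℤ] Chain b :=
  Finsupp.domLCongr (Equiv.arrowCongr (finCongr h) (Equiv.refl (Option Bool)))

/-- The basis element of `I¹` with value `v`. -/
def cellOf (v : Option Bool) : Cell 1 := fun _ => v

/-- The `n`-fold tensor product of chains of `I¹`, as a chain of `Iⁿ`. -/
noncomputable def tens {n : ℕ} (c : Fin n → Chain 1) : Chain n :=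
  Finsupp.equivFunOnFinite.symm fun σ => ∏ j, (c j) (cellOf (σ j))

/-- `τ` has an "extreme" standard decomposition of constant sign `ε`: for its `r`-th
factor `∂_{i}^{α}` (`r`, `i` 1-indexed), `(−1)^{i−r} α = ε`. -/
def ExtremeSign {n : ℕ} (τ : Cell n) (ε : ℤ) : Prop :=
  ∀ (j : Fin n) (α : Bool), τ j = some α →
    (-1 : ℤ) ^ ((j : ℕ) + 1 + τ.sLe j) * sgn α = ε

/-- The basis element `τ` corresponds to a precubical operation complementary to
`∂_{k+1}^γ` (with `k : Fin n`, i.e. `k+1` in the paper's 1-indexing): its standard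
decomposition has no factor at position `k`, and inserting `∂_{k+1}^{−γ}` produces
a standard decomposition of constant sign. -/
def CellCompl {n : ℕ} (k : Fin n) (γ : Bool) (τ : Cell n) : Prop :=
  τ k = none ∧ ∃ ε : ℤ, ExtremeSign (Function.update τ k (some (!γ))) ε

/-- The chain homotopy `D` associated to the face `∂_{k+1}^γ` (0-indexed `k : Fin n`). -/
noncomputable def Dfun {n : ℕ} (k : Fin n) (γ : Bool) (c : Chain n) : Chain n :=
  c.sum fun τ z =>
    if τ k = some (!γ) then
      (z * (-((-1 : ℤ) ^ Cell.below τ k * sgn γ))) •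
        Finsupp.single (Function.update τ k (none : Option Bool)) 1
    else 0

/-- The double sequence `A_q^β` of Proposition 6.4. -/
noncomputable def Aseq {n : ℕ} (k : Fin n) (γ : Bool) (q : ℕ) (β : Bool) :
    ℕ → Bool → Chain n :=
  fun i α =>
    if i + 1 < q then atom (un n) α i
    else if i + 1 = q then
      (if α = β then atom (un n) β i
       else atom (un n) β i - bd (Dfun k γ (atom (un n) β i)))
    else if i = q then sgn β • Dfun k γ (atom (un n) β (q - 1))
    else 0

/-- The elements `A_q` of Proposition 6.5, defined inductively from the `A_q^β` by
`A_0 = ⟨σ⟩` and `A_q = A_q^− #_{q−1} A_{q−1} #_{q−1} A_q^+`. -/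
noncomputable def Aq {n : ℕ} (k : Fin n) (γ : Bool) : ℕ → (ℕ → Bool → Chain n)
  | 0 => atomSeq (kcell k γ)
  | q + 1 => comp q (comp q (Aseq k γ (q + 1) false) (Aq k γ q)) (Aseq k γ (q + 1) true)

/-!
The atom `⟨u_n⟩_q^α` is the sum of the `q`-cells whose standard decomposition has constant
sign `α`: the boundary of a cell collects signs at the switch points of its sign pattern, and these
cancel unless the pattern is constant. The map `D` is a chain homotopy `∂D + D∂ = 1 − ε̌∂̌` to the
projection onto the face `∂_k^γ`, and `ε̌∂̌` carries `⟨u_n⟩_q^α` to `⟨σ⟩_q^α` for `q < n`. An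
induction on `q` then shows that `A_q` agrees with `⟨u_n⟩` below degree `q` and with `⟨σ⟩` above
it, and is `⟨σ⟩_q^α + D∂⟨u_n⟩_q^+` in degree `q`. In degree `n − 1`, where `⟨σ⟩_{n−1}^α = σ`, the
homotopy identity applied to the `(n−1)`-cells of sign `(−1)^{k−1}γ`, on which `D` vanishes,
turns this into `⟨u_n⟩_{n−1}^{(−1)^{k−1}γ}`.
-/

open Finset Function

variable {n : ℕ}

lemma card_filter_eq_add_one {ι : Type*} [Fintype ι] [DecidableEq ι] {p q : ι → Prop}
    [DecidablePred p] [DecidablePred q] {i : ι} (hp : p i) (hq : ¬ q i)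
    (h : ∀ j, j ≠ i → (p j ↔ q j)) : #{j | p j} = #{j | q j} + 1 := by
  have : filter p univ = insert i (filter q univ) := by
    ext j
    by_cases hj : j = i
    · subst hj; simp [hp]
    · simp [hj, h j hj]
  rw [this, card_insert_of_notMem (by simp [hq])]

lemma sum_filter_sign_switch {ι : Type*} [LinearOrder ι] (S : Finset ι) (e : ι → ℤ) {ε : ℤ}
    (hε : ε ≠ 0) (he : ∀ j ∈ S, e j = ε ∨ e j = -ε) :
    ∑ i ∈ S with (∀ j ∈ S, j < i → e j = ε) ∧ (∀ j ∈ S, i < j → e j = -ε), e i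
      = ε * ((if ∀ j ∈ S, e j = ε then 1 else 0) - (if ∀ j ∈ S, e j = -ε then 1 else 0)) := by
  induction S using Finset.induction_on_min with
  | empty => simp
  | insert a s ha ih =>
    have hε' : ε ≠ -ε := fun h => hε (by omega)
    have has : a ∉ s := fun h => lt_irrefl a (ha a h)
    have hPa : ((∀ j ∈ insert a s, j < a → e j = ε) ∧ (∀ j ∈ insert a s, a < j → e j = -ε)) ↔
        ∀ j ∈ s, e j = -ε := by
      simp only [forall_mem_insert, lt_irrefl, false_imp_iff, true_and]
      exact ⟨fun h j hj => h.2 j hj (ha j hj),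
        fun h => ⟨fun j hj hja => absurd (ha j hj) (lt_asymm hja), fun j hj _ => h j hj⟩⟩
    have hP : ∀ i ∈ s, ((∀ j ∈ insert a s, j < i → e j = ε) ∧
        (∀ j ∈ insert a s, i < j → e j = -ε)) ↔
        e a = ε ∧ ((∀ j ∈ s, j < i → e j = ε) ∧ (∀ j ∈ s, i < j → e j = -ε)) := by
      intro i hi
      simp only [forall_mem_insert, ha i hi, true_imp_iff, not_lt_of_gt (ha i hi), false_imp_iff,
        true_and, and_assoc]
    rw [sum_filter, sum_insert has, if_congr hPa rfl rfl,
      sum_congr rfl fun i hi => if_congr (hP i hi) rfl rfl]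
    have ih' := ih fun j hj => he j (mem_insert_of_mem hj)
    rcases he a (mem_insert_self a s) with hea | hea
    · simp only [hea, true_and, ← sum_filter, ih', forall_mem_insert, hε', false_and, if_false]
      split_ifs <;> ring
    · simp only [hea, hε'.symm, false_and, if_false, sum_const_zero, forall_mem_insert, true_and]
      split_ifs <;> ring

lemma bd_eq_linearCombination (c : Chain n) : bd c = Finsupp.linearCombination ℤ bdCell c :=
  (Finsupp.linearCombination_apply ℤ c).symm

lemma bd_single (τ : Cell n) (z : ℤ) : bd (Finsupp.single τ z) = z • bdCell τ := by
  rw [bd_eq_linearCombination, Finsupp.linearCombination_single]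

noncomputable def Dcell (k : Fin n) (γ : Bool) (τ : Cell n) : Chain n :=
  if τ k = some (!γ) then
    (-((-1 : ℤ) ^ τ.below k * sgn γ)) • Finsupp.single (update τ k none) 1
  else 0

lemma Dfun_eq_linearCombination (k : Fin n) (γ : Bool) (c : Chain n) :
    Dfun k γ c = Finsupp.linearCombination ℤ (Dcell k γ) c := by
  rw [Finsupp.linearCombination_apply, Dfun]
  refine Finsupp.sum_congr fun τ _ => ?_
  unfold Dcell
  split_ifs <;> simp [mul_smul]

lemma Dfun_sub (k : Fin n) (γ : Bool) (c d : Chain n) :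
    Dfun k γ (c - d) = Dfun k γ c - Dfun k γ d := by
  simp only [Dfun_eq_linearCombination, map_sub]

noncomputable def faceProjCell (k : Fin n) (γ : Bool) (τ : Cell n) : Chain n :=
  if τ k = none then 0 else Finsupp.single (update τ k (some γ)) 1

/-- The chain map `ε̌ ∂̌` of `Iⁿ` projecting onto the face `∂_{k+1}^γ`. -/
noncomputable def faceProj (k : Fin n) (γ : Bool) : Chain n →ₗ[ℤ] Chain n :=
  Finsupp.linearCombination ℤ (faceProjCell k γ)

noncomputable def ind (s : Finset (Cell n)) : Chain n := ∑ τ ∈ s, Finsupp.single τ 1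

lemma ind_apply (s : Finset (Cell n)) (ρ : Cell n) : ind s ρ = if ρ ∈ s then 1 else 0 := by
  classical
  simp [ind, Finsupp.finsetSum_apply, Finsupp.single_apply]

lemma ind_nonneg (s : Finset (Cell n)) : 0 ≤ ind s :=
  Finsupp.le_def.2 fun ρ => by rw [ind_apply]; split_ifs <;> simp

lemma linearCombination_ind (g : Cell n → Chain n) (s : Finset (Cell n)) :
    Finsupp.linearCombination ℤ g (ind s) = ∑ τ ∈ s, g τ := by
  simp [ind, map_sum]

lemma posPart_sub {x y : Chain n} (hx : 0 ≤ x) (hy : 0 ≤ y) (h : ∀ ρ, x ρ = 0 ∨ y ρ = 0) :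
    posPart (x - y) = x := by
  ext ρ
  have hxρ : 0 ≤ x ρ := Finsupp.le_def.1 hx ρ
  have hyρ : 0 ≤ y ρ := Finsupp.le_def.1 hy ρ
  rw [posPart, Finsupp.mapRange_apply, Finsupp.sub_apply]
  rcases h ρ with h | h <;> simp only [h] <;> omega

lemma negPart_sub {x y : Chain n} (hx : 0 ≤ x) (hy : 0 ≤ y) (h : ∀ ρ, x ρ = 0 ∨ y ρ = 0) :
    negPart (x - y) = y := by
  ext ρ
  have hxρ : 0 ≤ x ρ := Finsupp.le_def.1 hx ρ
  have hyρ : 0 ≤ y ρ := Finsupp.le_def.1 hy ρ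
  rw [negPart, Finsupp.mapRange_apply, Finsupp.sub_apply]
  rcases h ρ with h | h <;> simp only [h] <;> omega

lemma bdp_eq_of_bd_eq_sub {c x y : Chain n} (hc : bd c = x - y) (hx : 0 ≤ x) (hy : 0 ≤ y)
    (h : ∀ ρ, x ρ = 0 ∨ y ρ = 0) (α : Bool) : bdp α c = if α then x else y := by
  cases α
  · simp only [bdp, Bool.false_eq_true, if_false, hc]
    exact negPart_sub hx hy h
  · simp only [bdp, if_true, hc]
    exact posPart_sub hx hy h

namespace Cell

lemma below_congr {σ τ : Cell n} {i : Fin n} (h : ∀ j < i, (σ j = none ↔ τ j = none)) :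
    σ.below i = τ.below i := by
  unfold below
  congr 1
  exact filter_congr fun j _ => and_congr_right (h j)

lemma below_update_of_le (τ : Cell n) {i j : Fin n} (v : Option Bool) (h : i ≤ j) :
    below (update τ j v) i = τ.below i :=
  below_congr fun j' hj' => by rw [update_of_ne (by rintro rfl; exact absurd h (not_le.2 hj'))]

lemma below_update_none {τ : Cell n} {i j : Fin n} (h : j < i) {v : Option Bool} (hv : v ≠ none) :
    below (update τ j none) i = below (update τ j v) i + 1 :=
  card_filter_eq_add_one (i := j) ⟨h, by simp⟩ (by simp [hv])
    fun j' hj' => by simp [update_of_ne hj']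

lemma sLe_congr {σ τ : Cell n} {j : Fin n} (h : ∀ i ≤ j, (σ i = none ↔ τ i = none)) :
    σ.sLe j = τ.sLe j := by
  unfold sLe
  congr 1
  exact filter_congr fun i _ => and_congr_right fun hi => not_congr (h i hi)

lemma sLe_update_of_lt (τ : Cell n) {i j : Fin n} (v : Option Bool) (h : j < i) :
    sLe (update τ i v) j = τ.sLe j :=
  sLe_congr fun i' hi' => by rw [update_of_ne (by rintro rfl; exact absurd hi' (not_le.2 h))]

lemma sLe_update_none {τ : Cell n} {i j : Fin n} (h : i ≤ j) (hi : τ i ≠ none) :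
    τ.sLe j = sLe (update τ i none) j + 1 :=
  card_filter_eq_add_one ⟨h, hi⟩ (by simp) fun i' hi' => by simp [update_of_ne hi']

lemma below_add_sLe {τ : Cell n} {i : Fin n} (h : τ i ≠ none) :
    τ.below i + τ.sLe i = i + 1 := by
  have hsLe : τ.sLe i = #{j | j < i ∧ τ j ≠ none} + 1 :=
    card_filter_eq_add_one ⟨le_rfl, h⟩ (by simp) fun j hj => by rw [le_iff_lt_or_eq]; simp [hj]
  have hsplit := card_filter_add_card_filter_not (s := ({j | j < i} : Finset (Fin n)))
    (fun j => τ j = none)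
  rw [filter_filter, filter_filter, filter_gt_eq_Iio, Fin.card_Iio] at hsplit
  simp only [below, ne_eq] at hsLe ⊢
  omega

lemma dim_update_none {τ : Cell n} {i : Fin n} (h : τ i ≠ none) :
    dim (update τ i none) = τ.dim + 1 :=
  card_filter_eq_add_one (by simp) h fun j hj => by simp [update_of_ne hj]

lemma dim_update_some {τ : Cell n} {i : Fin n} (h : τ i = none) (δ : Bool) :
    dim (update τ i (some δ)) + 1 = τ.dim := by
  have := dim_update_none (τ := update τ i (some δ)) (i := i) (by simp)
  rwa [update_idem, update_eq_self_iff.2 h.symm, eq_comm] at this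

lemma card_ne_none_add_dim (τ : Cell n) : #{j | τ j ≠ none} + τ.dim = n := by
  rw [dim, add_comm, card_filter_add_card_filter_not, card_univ, Fintype.card_fin]

lemma dim_un : (un n).dim = n := by
  simp [un, dim]

lemma eq_un_of_dim_eq {τ : Cell n} (h : τ.dim = n) : τ = un n := by
  have := card_ne_none_add_dim τ
  funext j
  by_contra hj
  have : j ∈ ({j | τ j ≠ none} : Finset (Fin n)) := by simpa [un] using hj
  have := card_pos.2 ⟨j, this⟩
  omega

lemma exists_ne_none_of_dim_lt {τ : Cell n} (h : τ.dim < n) : ∃ i, τ i ≠ none := by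
  have := card_ne_none_add_dim τ
  obtain ⟨i, hi⟩ := card_pos.1 (show 0 < #{j | τ j ≠ none} by omega)
  exact ⟨i, by simpa using hi⟩

lemma exists_ne_none_ne {τ : Cell n} (h : τ.dim + 2 ≤ n) (k : Fin n) :
    ∃ j ≠ k, τ j ≠ none := by
  have := card_ne_none_add_dim τ
  obtain ⟨j, hj, hjk⟩ := exists_mem_ne (show 1 < #{j | τ j ≠ none} by omega) k
  exact ⟨j, hjk, by simpa using hj⟩

lemma eq_none_of_dim_add_one {τ : Cell n} {k : Fin n} (h : τ.dim + 1 = n) (hk : τ k ≠ none)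
    {j : Fin n} (hj : j ≠ k) : τ j = none := by
  have := card_ne_none_add_dim τ
  obtain ⟨a, ha⟩ := card_eq_one.1 (show #{j | τ j ≠ none} = 1 by omega)
  have hmem : ∀ i, τ i ≠ none → i = a := fun i hi =>
    mem_singleton.1 (ha ▸ (by simpa using hi))
  by_contra hne
  exact hj ((hmem j hne).trans (hmem k hk).symm)

lemma sLe_eq_one {τ : Cell n} {k : Fin n} (hk : τ k ≠ none) (h : ∀ j ≠ k, τ j = none) :
    τ.sLe k = 1 := by
  rw [sLe, card_eq_one]
  refine ⟨k, ?_⟩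
  ext j
  by_cases hj : j = k
  · subst hj; simp [hk]
  · simp [hj, h j hj]

end Cell

lemma dim_kcell (k : Fin n) (γ : Bool) : (kcell k γ).dim + 1 = n := by
  rw [kcell, Cell.dim_update_some rfl γ, Cell.dim_un]

def osgn : Option Bool → ℤ
  | none => 0
  | some δ => sgn δ

/-- The sign `(−1)^{i−r} α` that `ExtremeSign` attaches to the factor of `ρ` at `i`; it is `0`
where that factor is `u₁`. -/
def eSgn (ρ : Cell n) (i : Fin n) : ℤ := (-1) ^ ((i : ℕ) + 1 + ρ.sLe i) * osgn (ρ i)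

lemma neg_one_pow_below_mul_osgn (ρ : Cell n) (i : Fin n) :
    (-1 : ℤ) ^ ρ.below i * osgn (ρ i) = eSgn ρ i := by
  rcases hρ : ρ i with _ | δ
  · simp [eSgn, hρ, osgn]
  have := Cell.below_add_sLe (τ := ρ) (i := i) (by simp [hρ])
  rw [eSgn, hρ, show (i : ℕ) + 1 + ρ.sLe i = ρ.below i + 2 * ρ.sLe i by omega, pow_add, pow_mul]
  simp

lemma eSgn_eq_one_or_neg_one (ρ : Cell n) {i : Fin n} (h : ρ i ≠ none) :
    eSgn ρ i = 1 ∨ eSgn ρ i = -1 := by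
  rcases hρ : ρ i with _ | δ
  · exact absurd hρ h
  rcases neg_one_pow_eq_or ℤ ((i : ℕ) + 1 + ρ.sLe i) with hp | hp <;>
    cases δ <;> simp [eSgn, hρ, hp, osgn, sgn]

lemma extremeSign_iff {ρ : Cell n} {ε : ℤ} :
    ExtremeSign ρ ε ↔ ∀ i, ρ i ≠ none → eSgn ρ i = ε := by
  refine ⟨fun h i hi => ?_, fun h j δ hj => by simpa [eSgn, hj, osgn] using h j (by simp [hj])⟩
  obtain ⟨δ, hδ⟩ := Option.ne_none_iff_exists'.1 hi
  simpa [eSgn, hδ, osgn] using h i δ hδ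

lemma eSgn_update_none {ρ : Cell n} {i j : Fin n} (hi : ρ i ≠ none) (hj : j ≠ i) :
    eSgn (update ρ i none) j = if j < i then eSgn ρ j else -eSgn ρ j := by
  unfold eSgn
  rw [update_of_ne hj]
  split_ifs with hlt
  · rw [Cell.sLe_update_of_lt _ _ hlt]
  · rw [Cell.sLe_update_none (not_lt.1 hlt) hi, ← add_assoc, pow_succ]
    ring

lemma extremeSign_update_none_iff {ρ : Cell n} {i : Fin n} (hi : ρ i ≠ none) {ε : ℤ} :
    ExtremeSign (update ρ i none) ε ↔
      (∀ j, ρ j ≠ none → j < i → eSgn ρ j = ε) ∧ (∀ j, ρ j ≠ none → i < j → eSgn ρ j = -ε) := by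
  rw [extremeSign_iff]
  constructor
  · intro h
    refine ⟨fun j hj hlt => ?_, fun j hj hlt => ?_⟩
    · have := h j (by rwa [update_of_ne hlt.ne])
      rwa [eSgn_update_none hi hlt.ne, if_pos hlt] at this
    · have := h j (by rwa [update_of_ne hlt.ne'])
      rw [eSgn_update_none hi hlt.ne', if_neg (not_lt.2 hlt.le)] at this
      omega
  · rintro ⟨hlt, hgt⟩ j hj
    have hji : j ≠ i := by rintro rfl; simp at hj
    rw [update_of_ne hji] at hj
    rw [eSgn_update_none hi hji]
    rcases lt_or_gt_of_ne hji with h | h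
    · rw [if_pos h, hlt j hj h]
    · rw [if_neg (not_lt.2 h.le), hgt j hj h, neg_neg]

open Classical in
/-- The `q`-cells whose standard decomposition has constant sign `α`: their sum is the
atom `⟨u_n⟩_q^α`. -/
noncomputable def extremeCells (n q : ℕ) (α : Bool) : Finset (Cell n) :=
  {τ | τ.dim = q ∧ ExtremeSign τ (sgn α)}

lemma mem_extremeCells {q : ℕ} {α : Bool} {τ : Cell n} :
    τ ∈ extremeCells n q α ↔ τ.dim = q ∧ ExtremeSign τ (sgn α) := by
  simp [extremeCells]

noncomputable def bdAt (τ : Cell n) (i : Fin n) : Chain n :=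
  Finsupp.single (update τ i (some true)) 1 - Finsupp.single (update τ i (some false)) 1

lemma bdCell_eq_sum (τ : Cell n) :
    bdCell τ = ∑ i with τ i = none, ((-1 : ℤ) ^ τ.below i) • bdAt τ i := rfl

lemma bdAt_apply {τ : Cell n} {i : Fin n} (hτ : τ i = none) (ρ : Cell n) :
    bdAt τ i ρ = if update ρ i none = τ then osgn (ρ i) else 0 := by
  have key : ∀ v, update τ i v = ρ ↔ v = ρ i ∧ update ρ i none = τ := fun v => by
    simp only [update_eq_iff, hτ, true_and]
    exact and_congr_right' ⟨fun h x hx => (h x hx).symm, fun h x hx => (h x hx).symm⟩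
  simp only [bdAt, Finsupp.sub_apply, Finsupp.single_apply, key]
  by_cases h : update ρ i none = τ <;> rcases ρ i with _ | _ | _ <;> simp [h, osgn, sgn]

lemma bdCell_apply (τ ρ : Cell n) :
    bdCell τ ρ = ∑ i, if update ρ i none = τ then eSgn ρ i else 0 := by
  rw [bdCell_eq_sum, Finsupp.finsetSum_apply, sum_filter]
  refine sum_congr rfl fun i _ => ?_
  by_cases hτ : τ i = none
  · rw [if_pos hτ, Finsupp.smul_apply, bdAt_apply hτ, smul_eq_mul]
    split_ifs with h
    · rw [← h, Cell.below_update_of_le _ _ le_rfl, neg_one_pow_below_mul_osgn]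
    · rw [mul_zero]
  · rw [if_neg hτ, if_neg]
    rintro rfl
    simp at hτ

lemma bd_ind_apply (s : Finset (Cell n)) (ρ : Cell n) :
    bd (ind s) ρ = ∑ i, if update ρ i none ∈ s then eSgn ρ i else 0 := by
  classical
  rw [bd_eq_linearCombination, linearCombination_ind, Finsupp.finsetSum_apply]
  simp only [bdCell_apply]
  rw [sum_comm]
  exact sum_congr rfl fun i _ => sum_ite_eq s _ _

lemma eSgn_of_eq_none {ρ : Cell n} {i : Fin n} (h : ρ i = none) : eSgn ρ i = 0 := by
  simp [eSgn, h, osgn]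

lemma mem_extremeCells_iff_forall {q : ℕ} {ρ : Cell n} (hρ : ρ.dim = q) (α : Bool) :
    ρ ∈ extremeCells n q α ↔ ∀ j ∈ ({j | ρ j ≠ none} : Finset (Fin n)), eSgn ρ j = sgn α := by
  simp [mem_extremeCells, hρ, extremeSign_iff]

/-- A `q`-cell `ρ` receives the sign `eSgn ρ i` from each factor `i` whose replacement by `u₁` is
extreme of sign `β`, that is, from each switch point of the sign pattern of `ρ`. -/
lemma bd_ind_extremeCells (q : ℕ) (β : Bool) :
    bd (ind (extremeCells n (q + 1) β)) =
      ind (extremeCells n q true) - ind (extremeCells n q false) := by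
  ext ρ
  rw [Finsupp.sub_apply, bd_ind_apply, ind_apply, ind_apply]
  by_cases hdim : ρ.dim = q
  swap
  · rw [if_neg (fun h => hdim (mem_extremeCells.1 h).1),
      if_neg (fun h => hdim (mem_extremeCells.1 h).1), sub_zero]
    refine sum_eq_zero fun i _ => ?_
    by_cases hi : ρ i = none
    · simp [eSgn_of_eq_none hi]
    · rw [if_neg fun h => hdim ?_]
      have := (mem_extremeCells.1 h).1
      rw [Cell.dim_update_none hi] at this
      omega
  set S : Finset (Fin n) := {j | ρ j ≠ none}
  have hterm : ∀ i, (if update ρ i none ∈ extremeCells n (q + 1) β then eSgn ρ i else 0) =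
      if i ∈ S then (if (∀ j ∈ S, j < i → eSgn ρ j = sgn β) ∧
        (∀ j ∈ S, i < j → eSgn ρ j = -sgn β) then eSgn ρ i else 0) else 0 := by
    intro i
    by_cases hi : ρ i = none
    · simp [eSgn_of_eq_none hi]
    · simp [S, hi, mem_extremeCells, Cell.dim_update_none hi, hdim, extremeSign_update_none_iff hi]
  have hswitch := sum_filter_sign_switch S (eSgn ρ) (ε := sgn β) (by cases β <;> simp [sgn])
    fun j hj => by
      rcases eSgn_eq_one_or_neg_one ρ (mem_filter.1 hj).2 with h | h <;> cases β <;> simp [sgn, h]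
  rw [sum_congr rfl fun i _ => hterm i, sum_ite_mem, univ_inter, ← sum_filter]
  convert hswitch using 3
  rw [if_congr (mem_extremeCells_iff_forall hdim true) rfl rfl,
    if_congr (mem_extremeCells_iff_forall hdim false) rfl rfl]
  cases β <;> simp only [sgn, if_true, Bool.false_eq_true, if_false, neg_neg] <;> ring

lemma bd_ind_extremeCells_zero (α : Bool) : bd (ind (extremeCells n 0 α)) = 0 := by
  rw [bd_eq_linearCombination, linearCombination_ind]
  refine sum_eq_zero fun τ hτ => ?_
  have h0 : ({i | τ i = none} : Finset (Fin n)) = ∅ :=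
    card_eq_zero.1 (mem_extremeCells.1 hτ).1
  rw [bdCell, h0, sum_empty]

lemma bd_ind_extremeCells_eq (q : ℕ) (α β : Bool) :
    bd (ind (extremeCells n q α)) = bd (ind (extremeCells n q β)) := by
  cases q with
  | zero => rw [bd_ind_extremeCells_zero, bd_ind_extremeCells_zero]
  | succ q => rw [bd_ind_extremeCells, bd_ind_extremeCells]

lemma extremeCells_self (α : Bool) : extremeCells n n α = {un n} := by
  ext τ
  rw [mem_extremeCells, mem_singleton]
  refine ⟨fun h => Cell.eq_un_of_dim_eq h.1, ?_⟩
  rintro rfl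
  exact ⟨Cell.dim_un, fun j δ hj => absurd hj (by simp [un])⟩

lemma ind_extremeCells_disjoint {q : ℕ} (hq : q < n) (ρ : Cell n) :
    ind (extremeCells n q true) ρ = 0 ∨ ind (extremeCells n q false) ρ = 0 := by
  simp only [ind_apply, ite_eq_right_iff, one_ne_zero, imp_false, ← not_and_or]
  rintro ⟨htrue, hfalse⟩
  obtain ⟨hdim, htrue⟩ := mem_extremeCells.1 htrue
  obtain ⟨i, hi⟩ := Cell.exists_ne_none_of_dim_lt (hdim ▸ hq)
  have := (extremeSign_iff.1 htrue i hi).symm.trans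
    (extremeSign_iff.1 (mem_extremeCells.1 hfalse).2 i hi)
  simp [sgn] at this

lemma atom_of_lt_dim {σ : Cell n} {q : ℕ} (h : q < σ.dim) (α : Bool) :
    atom σ α q = bdp α (atom σ α (q + 1)) := by
  rw [atom, atom, if_pos h.le, if_pos (Nat.succ_le_of_lt h),
    show σ.dim - q = σ.dim - (q + 1) + 1 by omega,
    iterate_succ_apply']

lemma atom_dim (σ : Cell n) (α : Bool) : atom σ α σ.dim = Finsupp.single σ 1 := by
  rw [atom, if_pos le_rfl, Nat.sub_self, iterate_zero_apply]

lemma atom_of_dim_lt {σ : Cell n} {q : ℕ} (h : σ.dim < q) (α : Bool) : atom σ α q = 0 := by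
  rw [atom, if_neg (not_le.2 h)]

lemma atom_un_eq_ind {q : ℕ} (hq : q ≤ n) (α : Bool) :
    atom (un n) α q = ind (extremeCells n q α) := by
  induction hq using Nat.decreasingInduction generalizing α with
  | self =>
    rw [extremeCells_self, ind, sum_singleton, ← atom_dim, Cell.dim_un]
  | of_succ q hq ih =>
    rw [atom_of_lt_dim (by rwa [Cell.dim_un]), ih,
      bdp_eq_of_bd_eq_sub (bd_ind_extremeCells q α) (ind_nonneg _) (ind_nonneg _)
        (ind_extremeCells_disjoint hq)]
    cases α <;> rfl

lemma Dcell_of_ne {k : Fin n} {γ : Bool} {τ : Cell n} (h : τ k ≠ some (!γ)) : Dcell k γ τ = 0 :=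
  if_neg h

lemma Dfun_bdCell (k : Fin n) (γ : Bool) (τ : Cell n) :
    Dfun k γ (bdCell τ) = ∑ i with τ i = none, ((-1 : ℤ) ^ τ.below i) •
      (Dcell k γ (update τ i (some true)) - Dcell k γ (update τ i (some false))) := by
  simp [Dfun_eq_linearCombination, bdCell_eq_sum, bdAt, map_sum]

lemma neg_one_pow_mul_self (m : ℕ) : (-1 : ℤ) ^ m * (-1) ^ m = 1 :=
  pow_mul_pow_eq_one m (by norm_num)

lemma smul_bdAt_update_self (τ : Cell n) (k : Fin n) (γ : Bool) :
    -sgn γ • bdAt τ k = Finsupp.single (update τ k (some !γ)) 1 -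
      Finsupp.single (update τ k (some γ)) 1 := by
  cases γ <;> simp [bdAt, sgn]

lemma Dcell_sub_Dcell_update_self {k : Fin n} (γ : Bool) {τ : Cell n} (hk : τ k = none) :
    ((-1 : ℤ) ^ τ.below k) • (Dcell k γ (update τ k (some true)) -
      Dcell k γ (update τ k (some false))) = Finsupp.single τ 1 := by
  have hτ : update τ k none = τ := update_eq_self_iff.2 hk.symm
  cases γ <;> simp [Dcell, Cell.below_update_of_le, hτ, sgn, neg_one_pow_mul_self]

lemma Dcell_sub_Dcell_update_of_ne {k i : Fin n} {γ : Bool} {τ : Cell n} (hik : i ≠ k)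
    (hk : τ k = some (!γ)) :
    Dcell k γ (update τ i (some true)) - Dcell k γ (update τ i (some false)) =
      (-((-1 : ℤ) ^ Cell.below (update τ i (some true)) k * sgn γ)) • bdAt (update τ k none) i := by
  have hbelow : Cell.below (update τ i (some false)) k = Cell.below (update τ i (some true)) k :=
    Cell.below_congr fun j _ => by by_cases hj : j = i <;> simp [hj]
  simp only [Dcell, update_of_ne hik.symm, hk, if_true, hbelow, bdAt, smul_sub,
    update_comm hik]

/-- The terms of `∂D` and `D∂` coming from a factor `u₁` at `i ≠ k` cancel. -/
lemma neg_one_pow_below_cancel {k i : Fin n} {γ : Bool} {τ : Cell n} (hik : i ≠ k)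
    (hi : τ i = none) (hk : τ k ≠ none) :
    -((-1 : ℤ) ^ τ.below k * sgn γ) * (-1) ^ Cell.below (update τ k none) i +
      (-1) ^ τ.below i * -((-1) ^ Cell.below (update τ i (some true)) k * sgn γ) = 0 := by
  rcases lt_or_gt_of_ne hik with h | h
  · have hτ : update τ i none = τ := update_eq_self_iff.2 hi.symm
    have := Cell.below_update_none (τ := τ) h (v := some true) (by simp)
    rw [hτ] at this
    rw [Cell.below_update_of_le _ _ h.le, this, pow_succ]
    ring
  · have hτ : update τ k (τ k) = τ := update_eq_self_iff.2 rfl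
    have := Cell.below_update_none (τ := τ) h hk
    rw [hτ] at this
    rw [this, Cell.below_update_of_le _ _ h.le, pow_succ]
    ring

/-- The boundary of `Dτ` has one term from the new factor `u₁` at `k`, which gives
`τ − ε̌∂̌τ`; its other terms cancel those of `D∂τ`. -/
lemma bd_Dcell_add_Dfun_bdCell_of_eq {k : Fin n} {γ : Bool} {τ : Cell n}
    (hk : τ k = some (!γ)) :
    bd (Dcell k γ τ) + Dfun k γ (bdCell τ) =
      Finsupp.single τ 1 - Finsupp.single (update τ k (some γ)) 1 := by
  have hnone : filter (fun i => update τ k none i = none) univ =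
      insert k (filter (fun i => τ i = none) univ) := by
    ext i; by_cases hi : i = k <;> simp [hi, update_of_ne]
  have hcancel : ∀ i ∈ filter (fun i => τ i = none) univ,
      -((-1 : ℤ) ^ τ.below k * sgn γ) • ((-1 : ℤ) ^ Cell.below (update τ k none) i •
        bdAt (update τ k none) i) + (-1 : ℤ) ^ τ.below i •
        (Dcell k γ (update τ i (some true)) - Dcell k γ (update τ i (some false))) = 0 := by
    intro i hi
    have hi : τ i = none := by simpa using hi
    have hik : i ≠ k := by rintro rfl; simp [hi] at hk
    rw [Dcell_sub_Dcell_update_of_ne hik hk, smul_smul, smul_smul, ← add_smul,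
      neg_one_pow_below_cancel hik hi (by simp [hk]), zero_smul]
  have hk_term : -((-1 : ℤ) ^ τ.below k * sgn γ) • ((-1 : ℤ) ^ Cell.below (update τ k none) k •
      bdAt (update τ k none) k) = Finsupp.single τ 1 - Finsupp.single (update τ k (some γ)) 1 := by
    have hbdAt : bdAt (update τ k none) k = bdAt τ k := by simp [bdAt]
    rw [Cell.below_update_of_le _ _ le_rfl, hbdAt, smul_smul,
      show -((-1 : ℤ) ^ τ.below k * sgn γ) * (-1) ^ τ.below k = -sgn γ by
        linear_combination (-sgn γ) * neg_one_pow_mul_self (τ.below k),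
      smul_bdAt_update_self, ← hk, update_eq_self_iff.2 rfl]
  rw [Dcell, if_pos hk, Finsupp.smul_single_one, bd_single, bdCell_eq_sum, hnone,
    sum_insert (by simp [hk]), smul_add, smul_sum, Dfun_bdCell, add_assoc,
    ← sum_add_distrib, sum_eq_zero hcancel, add_zero, hk_term]

lemma bd_Dcell_add_Dfun_bdCell (k : Fin n) (γ : Bool) (τ : Cell n) :
    bd (Dcell k γ τ) + Dfun k γ (bdCell τ) = Finsupp.single τ 1 - faceProjCell k γ τ := by
  rcases hk : τ k with _ | δ
  · rw [Dcell_of_ne (by simp [hk]), faceProjCell, if_pos hk, Dfun_bdCell,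
      sum_eq_single_of_mem k (by simpa using hk), Dcell_sub_Dcell_update_self γ hk]
    · simp [bd_eq_linearCombination]
    · intro i _ hik
      rw [Dcell_of_ne (by simp [update_of_ne hik.symm, hk]),
        Dcell_of_ne (by simp [update_of_ne hik.symm, hk]), sub_zero, smul_zero]
  rw [faceProjCell, if_neg (by simp [hk])]
  by_cases hδ : δ = γ
  · subst hδ
    rw [Dcell_of_ne (by simp [hk]), update_eq_self_iff.2 hk.symm, Dfun_bdCell]
    refine (zero_add _).trans ((sum_eq_zero fun i hi => ?_).trans (sub_self _).symm)
    have hik : i ≠ k := by rintro rfl; simp [hk] at hi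
    rw [Dcell_of_ne (by simp [update_of_ne hik.symm, hk]),
      Dcell_of_ne (by simp [update_of_ne hik.symm, hk]), sub_zero, smul_zero]
  · exact bd_Dcell_add_Dfun_bdCell_of_eq (by rw [hk]; cases δ <;> cases γ <;> simp_all)

lemma bd_Dfun_add_Dfun_bd (k : Fin n) (γ : Bool) (c : Chain n) :
    bd (Dfun k γ c) + Dfun k γ (bd c) = c - faceProj k γ c := by
  simp only [bd_eq_linearCombination, Dfun_eq_linearCombination]
  have hext : Finsupp.linearCombination ℤ bdCell ∘ₗ Finsupp.linearCombination ℤ (Dcell k γ) +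
      Finsupp.linearCombination ℤ (Dcell k γ) ∘ₗ Finsupp.linearCombination ℤ bdCell =
      LinearMap.id - faceProj k γ :=
    Finsupp.lhom_ext fun τ z => by
      have := congrArg (z • ·) (bd_Dcell_add_Dfun_bdCell k γ τ)
      simpa [bd_eq_linearCombination, Dfun_eq_linearCombination, faceProj, smul_sub] using this
  exact LinearMap.congr_fun hext c

lemma faceProj_bdCell (k : Fin n) (γ : Bool) (τ : Cell n) :
    faceProj k γ (bdCell τ) = bd (faceProjCell k γ τ) := by
  have hsum : faceProj k γ (bdCell τ) = ∑ i with τ i = none, ((-1 : ℤ) ^ τ.below i) •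
      (faceProjCell k γ (update τ i (some true)) - faceProjCell k γ (update τ i (some false))) := by
    simp [faceProj, bdCell_eq_sum, bdAt, map_sum]
  rw [hsum]
  by_cases hk : τ k = none
  · rw [faceProjCell, if_pos hk, bd_eq_linearCombination, map_zero]
    refine sum_eq_zero fun i _ => ?_
    by_cases hik : i = k
    · subst hik
      simp [faceProjCell]
    · simp [faceProjCell, update_of_ne (Ne.symm hik), hk]
  · have hnone : filter (fun i => update τ k (some γ) i = none) univ =
        filter (fun i => τ i = none) univ := by
      ext i; by_cases hi : i = k <;> simp [hi, hk, update_of_ne]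
    rw [faceProjCell, if_neg hk, bd_single, one_smul, bdCell_eq_sum, hnone]
    refine sum_congr rfl fun i hi => ?_
    have hik : i ≠ k := by rintro rfl; simp [hk] at hi
    have hbelow : Cell.below (update τ k (some γ)) i = τ.below i :=
      Cell.below_congr fun j _ => by by_cases hj : j = k <;> simp [hj, hk]
    simp [faceProjCell, update_of_ne (Ne.symm hik), hk, update_comm hik, hbelow, bdAt]

lemma faceProj_bd (k : Fin n) (γ : Bool) (c : Chain n) :
    faceProj k γ (bd c) = bd (faceProj k γ c) := by
  simp only [bd_eq_linearCombination]
  have hext : faceProj k γ ∘ₗ Finsupp.linearCombination ℤ bdCell =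
      Finsupp.linearCombination ℤ bdCell ∘ₗ faceProj k γ :=
    Finsupp.lhom_ext fun τ z => by
      simpa [faceProj, ← bd_eq_linearCombination] using
        congrArg (z • ·) (faceProj_bdCell k γ τ)
  exact LinearMap.congr_fun hext c

lemma sgn_injective : Function.Injective sgn := by
  intro a b h
  cases a <;> cases b <;> simp_all [sgn]

lemma sgn_twist (α : Bool) (m : ℕ) : sgn (twist α m) = (-1) ^ m * sgn α := by
  rcases Nat.even_or_odd m with hm | hm
  · simp [twist, hm, hm.neg_one_pow]
  · cases α <;> simp [twist, Nat.not_even_iff_odd.2 hm, hm.neg_one_pow, sgn]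

lemma twist_twist (α : Bool) (m : ℕ) : twist (twist α m) m = α := by
  unfold twist
  split_ifs <;> simp

lemma sign_eq_of_mem_extremeCells {q : ℕ} (hq : q + 2 ≤ n) {k : Fin n} {α α' : Bool}
    {τ τ' : Cell n} (hτ : τ ∈ extremeCells n q α) (hτ' : τ' ∈ extremeCells n q α')
    (hk : τ k ≠ none) (hk' : τ' k ≠ none) (h : ∀ j ≠ k, τ j = τ' j) : α = α' := by
  obtain ⟨hdim, hext⟩ := mem_extremeCells.1 hτ
  obtain ⟨j, hjk, hj⟩ := Cell.exists_ne_none_ne (hdim ▸ hq) k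
  have hsLe : τ.sLe j = τ'.sLe j := Cell.sLe_congr fun i _ => by
    by_cases hik : i = k
    · subst hik; simp [hk, hk']
    · rw [h i hik]
  have heSgn : eSgn τ j = eSgn τ' j := by rw [eSgn, eSgn, hsLe, h j hjk]
  apply sgn_injective
  rw [← extremeSign_iff.1 hext j hj, heSgn,
    extremeSign_iff.1 (mem_extremeCells.1 hτ').2 j (by rwa [← h j hjk])]

lemma faceProj_ind (k : Fin n) (γ : Bool) (s : Finset (Cell n)) :
    faceProj k γ (ind s) = ∑ τ ∈ s, faceProjCell k γ τ :=
  linearCombination_ind _ s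

lemma faceProjCell_nonneg (k : Fin n) (γ : Bool) (τ : Cell n) : 0 ≤ faceProjCell k γ τ := by
  unfold faceProjCell
  split_ifs
  · exact le_rfl
  · exact Finsupp.single_nonneg.2 zero_le_one

lemma faceProj_ind_nonneg (k : Fin n) (γ : Bool) (s : Finset (Cell n)) :
    0 ≤ faceProj k γ (ind s) := by
  rw [faceProj_ind]
  exact sum_nonneg fun τ _ => faceProjCell_nonneg k γ τ

lemma faceProj_ind_extremeCells_disjoint {q : ℕ} (hq : q + 2 ≤ n) (k : Fin n) (γ : Bool)
    (ρ : Cell n) :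
    faceProj k γ (ind (extremeCells n q true)) ρ = 0 ∨
      faceProj k γ (ind (extremeCells n q false)) ρ = 0 := by
  have hsupp : ∀ α, faceProj k γ (ind (extremeCells n q α)) ρ ≠ 0 →
      ∃ τ ∈ extremeCells n q α, τ k ≠ none ∧ update τ k (some γ) = ρ := fun α h => by
    rw [faceProj_ind, Finsupp.finsetSum_apply] at h
    obtain ⟨τ, hτ, hne⟩ := exists_ne_zero_of_sum_ne_zero h
    by_cases hk : τ k = none
    · simp [faceProjCell, hk] at hne
    · refine ⟨τ, hτ, hk, ?_⟩
      by_contra hρ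
      simp [faceProjCell, hk, hρ] at hne
  by_contra! hboth
  obtain ⟨τ, hτ, hk, rfl⟩ := hsupp true hboth.1
  obtain ⟨τ', hτ', hk', heq⟩ := hsupp false hboth.2
  have := sign_eq_of_mem_extremeCells hq hτ hτ' hk hk' fun j hj => by
    simpa [update_of_ne hj] using congrFun heq.symm j
  simp at this

lemma eq_update_un_of_dim_add_one {τ : Cell n} {k : Fin n} (h : τ.dim + 1 = n) (hk : τ k ≠ none) :
    τ = update (un n) k (τ k) := by
  funext j
  by_cases hj : j = k
  · subst hj; simp
  · rw [update_of_ne hj, Cell.eq_none_of_dim_add_one h hk hj, un]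

lemma update_un_mem_extremeCells_iff (k : Fin n) (δ α : Bool) :
    update (un n) k (some δ) ∈ extremeCells n (n - 1) α ↔ δ = twist α k := by
  have hdim := Cell.dim_update_some (τ := un n) (i := k) rfl δ
  rw [Cell.dim_un] at hdim
  have hsLe : Cell.sLe (update (un n) k (some δ)) k = 1 :=
    Cell.sLe_eq_one (by simp) fun j hj => by simp [update_of_ne hj, un]
  have heSgn : eSgn (update (un n) k (some δ)) k = (-1) ^ (k : ℕ) * sgn δ := by
    rw [eSgn, hsLe, update_self, osgn, pow_add, pow_add]
    ring
  rw [mem_extremeCells, extremeSign_iff, ← sgn_injective.eq_iff, sgn_twist]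
  refine ⟨fun h => ?_, fun h => ⟨by omega, fun i hi => ?_⟩⟩
  · rw [← h.2 k (by simp), heSgn, ← mul_assoc, neg_one_pow_mul_self, one_mul]
  · have hik : i = k := by by_contra hik; simp [update_of_ne hik, un] at hi
    subst hik
    rw [heSgn, h, ← mul_assoc, neg_one_pow_mul_self, one_mul]

lemma faceProj_ind_extremeCells_pred (k : Fin n) (γ α : Bool) :
    faceProj k γ (ind (extremeCells n (n - 1) α)) = Finsupp.single (kcell k γ) 1 := by
  have hmem := (update_un_mem_extremeCells_iff k (twist α k) α).2 rfl
  rw [faceProj_ind, sum_eq_single_of_mem _ hmem]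
  · simp [faceProjCell, kcell]
  · intro τ hτ hne
    rw [faceProjCell, if_pos]
    by_contra hk
    obtain ⟨δ, hδ⟩ := Option.ne_none_iff_exists'.1 hk
    have hdim : Cell.dim τ + 1 = n := by have := (mem_extremeCells.1 hτ).1; have := k.pos; omega
    have hτ' := eq_update_un_of_dim_add_one hdim hk
    rw [hτ', hδ] at hτ hne
    exact hne (by rw [(update_un_mem_extremeCells_iff k δ α).1 hτ])

lemma Dfun_ind_extremeCells_pred (k : Fin n) (γ : Bool) :
    Dfun k γ (ind (extremeCells n (n - 1) (twist γ k))) = 0 := by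
  rw [Dfun_eq_linearCombination, linearCombination_ind]
  refine sum_eq_zero fun τ hτ => Dcell_of_ne fun hk => ?_
  have hdim : Cell.dim τ + 1 = n := by have := (mem_extremeCells.1 hτ).1; have := k.pos; omega
  rw [eq_update_un_of_dim_add_one (k := k) hdim (by simp [hk]), hk, update_un_mem_extremeCells_iff,
    twist_twist] at hτ
  cases γ <;> simp at hτ

lemma faceProj_atom_un (k : Fin n) (γ : Bool) {q : ℕ} (hq : q + 1 ≤ n) (α : Bool) :
    faceProj k γ (atom (un n) α q) = atom (kcell k γ) α q := by
  have hdim := dim_kcell k γ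
  replace hq : q ≤ n - 1 := by omega
  induction hq using Nat.decreasingInduction generalizing α with
  | self =>
    rw [atom_un_eq_ind (by omega), faceProj_ind_extremeCells_pred, ← atom_dim,
      show (kcell k γ).dim = n - 1 by omega]
  | of_succ q hq ih =>
    have hbd : bd (faceProj k γ (ind (extremeCells n (q + 1) α))) =
        faceProj k γ (ind (extremeCells n q true)) -
          faceProj k γ (ind (extremeCells n q false)) := by
      rw [← faceProj_bd, bd_ind_extremeCells, map_sub]
    rw [atom_of_lt_dim (σ := kcell k γ) (by omega), ← ih, atom_un_eq_ind (by omega),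
      atom_un_eq_ind (by omega),
      bdp_eq_of_bd_eq_sub hbd (faceProj_ind_nonneg _ _ _) (faceProj_ind_nonneg _ _ _)
        (faceProj_ind_extremeCells_disjoint (by omega) k γ)]
    cases α <;> rfl

lemma bd_atom_un {q : ℕ} (hq : q + 1 ≤ n) (α : Bool) :
    bd (atom (un n) α (q + 1)) = atom (un n) true q - atom (un n) false q := by
  rw [atom_un_eq_ind hq, bd_ind_extremeCells, atom_un_eq_ind (by omega), atom_un_eq_ind (by omega)]

/-- Since `∂⟨u_n⟩_q^α` does not depend on `α`, the left side is the same for both signs. -/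
lemma Dfun_bd_atom_un (k : Fin n) (γ : Bool) {q : ℕ} (hq : q + 1 ≤ n) (α : Bool) :
    Dfun k γ (bd (atom (un n) true q)) =
      atom (un n) α q - atom (kcell k γ) α q - bd (Dfun k γ (atom (un n) α q)) := by
  have h := bd_Dfun_add_Dfun_bd k γ (atom (un n) α q)
  rw [faceProj_atom_un k γ hq] at h
  rw [atom_un_eq_ind (by omega), bd_ind_extremeCells_eq q true α, ← atom_un_eq_ind (by omega)]
  linear_combination (norm := module) h

lemma comp_apply_of_lt {p i : ℕ} (x y : ℕ → Bool → Chain n) (h : i < p) (β : Bool) :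
    comp p x y i β = y i β := by
  simp [comp, dOp, h]

lemma comp_apply_self (p : ℕ) (x y : ℕ → Bool → Chain n) (β : Bool) :
    comp p x y p β = x p β - x p true + y p β := by
  simp [comp, dOp]

lemma comp_apply_of_gt {p i : ℕ} (x y : ℕ → Bool → Chain n) (h : p < i) (β : Bool) :
    comp p x y i β = x i β + y i β := by
  simp [comp, dOp, h.not_gt, h.ne']

lemma Aq_apply (k : Fin n) (γ : Bool) {q : ℕ} (hq : q + 1 ≤ n) (i : ℕ) (α : Bool) :
    Aq k γ q i α =
      if i < q then atom (un n) α i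
      else if i = q then atom (kcell k γ) α q + Dfun k γ (bd (atom (un n) true q))
      else atom (kcell k γ) α i := by
  induction q generalizing i α with
  | zero =>
    have h0 : bd (atom (un n) true 0) = 0 := by
      rw [atom_un_eq_ind (by omega), bd_ind_extremeCells_zero]
    rcases i with _ | i <;> simp [Aq, atomSeq, h0, Dfun_eq_linearCombination]
  | succ q ih =>
    have ih := ih (by omega)
    rcases lt_trichotomy q i with hi | rfl | hi
    · rw [Aq, comp_apply_of_gt _ _ hi, comp_apply_of_gt _ _ hi, ih, if_neg (by omega),
        if_neg (by omega), if_neg (by omega)]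
      obtain rfl | hi' : i = q + 1 ∨ q + 1 < i := by omega
      · have hA : ∀ β, Aseq k γ (q + 1) β (q + 1) α = sgn β • Dfun k γ (atom (un n) β q) := by
          simp [Aseq]
        rw [hA, hA, if_pos rfl, bd_atom_un (by omega), Dfun_sub, sgn, sgn]
        simp only [Bool.false_eq_true, if_false, if_true]
        module
      · have hA : ∀ β, Aseq k γ (q + 1) β i α = 0 := by
          simp [Aseq, hi'.ne', (Nat.lt_succ_of_lt hi').not_gt, show i ≠ q by omega]
        rw [hA, hA, zero_add, add_zero, if_neg hi'.ne']
    · rw [Aq, comp_apply_self, comp_apply_self, comp_apply_self, if_pos (by omega)]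
      cases α
      · simp only [Aseq, ih, lt_irrefl, if_false, if_true, Bool.false_eq_true, Bool.true_eq_false]
        have h1 := Dfun_bd_atom_un k γ (q := q) (by omega) true
        have h2 := Dfun_bd_atom_un k γ (q := q) (by omega) false
        linear_combination (norm := module) h2 - h1
      · simp [Aseq]
    · rw [Aq, comp_apply_of_lt _ _ hi, if_pos (by omega)]
      simp [Aseq, hi]

/-- for `1 ≤ k ≤ n` (here `k : Fin n`, 0-indexed) and a sign `γ`, with
`σ = u_{k−1} ⊗ ∂^γ u₁ ⊗ u_{n−k}` and the inductively defined composites `A_q`,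
one has `A_{n−1} = d_{n−1}^{(−1)^{k−1}γ} ⟨u_n⟩`. -/
theorem Aq_top_eq_dOp_atom (n : ℕ) (k : Fin n) (γ : Bool) :
    Aq k γ (n - 1) = dOp (n - 1) (twist γ (k : ℕ)) (atomSeq (un n)) := by
  have hn : 0 < n := k.pos
  have hdim : (kcell k γ).dim = n - 1 := by have := dim_kcell k γ; omega
  have hσ : ∀ β, atom (kcell k γ) β (n - 1) = Finsupp.single (kcell k γ) 1 :=
    fun β => hdim ▸ atom_dim _ β
  funext i α
  simp only [Aq_apply k γ (Nat.sub_add_cancel hn).le, dOp, atomSeq]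
  split_ifs with hlt heq
  · rfl
  · subst heq
    rw [Dfun_bd_atom_un k γ (by omega) (twist γ k), atom_un_eq_ind (by omega),
      Dfun_ind_extremeCells_pred, hσ, hσ, bd_eq_linearCombination, map_zero]
    abel
  · exact atom_of_dim_lt (by omega) α

end CubicalNerve
end

section
/- In a complete stratified precubical set, if x ∘_k y is a composite such that x and y are thin n-cubes, then x ∘_k y is thin. -/
namespace CubicalNerve

/-- A stratified precubical set: a sequence of sets `X n` with face operations
`∂_i^α : X n → X (n-1)` (with `i : Fin n`, i.e. `i+1` in the paper's 1-indexing)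
satisfying the precubical relations, together with a class of thin `n`-cubes for
`n ≥ 1` (a `0`-cube is never thin). -/
structure SPS where
  X : ℕ → Type
  face : ∀ {n : ℕ}, Fin n → Bool → X n → X (n - 1)
  face_rel : ∀ {n : ℕ} (j : Fin n) (i : Fin (n - 1)) (h : (j : ℕ) ≤ (i : ℕ)) (α β : Bool)
      (x : X n),
    face i α (face j β x) =
      face ⟨(j : ℕ), lt_of_le_of_lt h i.isLt⟩ β
        (face ⟨(i : ℕ) + 1, by have := i.isLt; omega⟩ α x)
  thin : ∀ {n : ℕ}, X n → Prop
  thin_zero : ∀ x : X 0, ¬ thin x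

/-- The face operation `∂_i^α` with a 1-indexed natural number index (clamped into
range); the identity map in dimension `0`. -/
def SPS.faceN (P : SPS) (i : ℕ) (α : Bool) : ∀ {n : ℕ}, P.X n → P.X (n - 1)
  | 0, x => x
  | m + 1, x =>
      P.face (⟨min (i - 1) m, Nat.lt_succ_of_le (Nat.min_le_right _ _)⟩ : Fin (m + 1)) α x

/-- The action of a nonidentity precubical operation, written as a nonempty list
`(p :: L)` of 1-indexed (index, sign) pairs composed right-to-left (so the last
entry of the list is applied first), on a box or shell `b` (given as a family of
`m`-cubes indexed by all of `Fin (m+1) × Bool`): the last factor picks out an entry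
of `b`, and the remaining factors act by face operations. -/
def SPS.apBoxAux (P : SPS) {m : ℕ} (b : Fin (m + 1) → Bool → P.X m) :
    (ℕ × Bool) → (L : List (ℕ × Bool)) → P.X (m - L.length)
  | p, [] => b ⟨min (p.1 - 1) m, Nat.lt_succ_of_le (Nat.min_le_right _ _)⟩ p.2
  | p, q :: L => P.faceN p.1 p.2 (P.apBoxAux b q L)

/-- `L` is the standard decomposition of a precubical operation on `n`-cubes:
its 1-indexed indices are strictly increasing and lie in `{1, …, n}`. -/
def IsStdList (n : ℕ) (L : List (ℕ × Bool)) : Prop :=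
  L.Chain' (fun p q => p.1 < q.1) ∧ ∀ p ∈ L, 1 ≤ p.1 ∧ p.1 ≤ n

/-- Insertion of a factor into a standard decomposition, preserving the order. -/
def insSorted (a : ℕ × Bool) : List (ℕ × Bool) → List (ℕ × Bool)
  | [] => [a]
  | p :: L => if a.1 ≤ p.1 then a :: p :: L else p :: insSorted a L

/-- The standard decomposition `L` has constant sign: `(−1)^{i(r)−r} α(r)` is the same
for all `r`, where `∂_{i(r)}^{α(r)}` is the `r`-th factor (`r` 1-indexed). -/
def ConstSign (L : List (ℕ × Bool)) : Prop :=
  ∃ ε : ℤ, ∀ (t : ℕ) (h : t < L.length),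
    (-1 : ℤ) ^ ((L.get ⟨t, h⟩).1 + t + 1) * sgn (L.get ⟨t, h⟩).2 = ε

/-- The precubical operation with standard decomposition `L` (on `n`-cubes) is
complementary to the face operation `∂_k^γ` (`k` 1-indexed): `L` has no factor
`∂_k^±`, and inserting `∂_k^{−γ}` produces a standard decomposition with constant
sign. -/
def ComplOp (n k : ℕ) (γ : Bool) (L : List (ℕ × Bool)) : Prop :=
  IsStdList n L ∧ (∀ p ∈ L, p.1 ≠ k) ∧ ConstSign (insSorted (k, !γ) L)

/-- The face operation `∂_l^δ` is complementary to `∂_k^γ` (1-indexed). -/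
def FaceComplOp (n k : ℕ) (γ : Bool) (l : ℕ) (δ : Bool) : Prop := ComplOp n k γ [(l, δ)]

/-- `b` is an `(m+1)`-box opposite `∂_k^γ`, recorded as a total family of `m`-cubes
whose value at `(k, γ)` is irrelevant: the compatibility conditions
`∂_i^α b_j^β = ∂_j^β b_{i+1}^α` hold whenever neither index involved is `(k, γ)`. -/
def SPS.IsBox (P : SPS) {m : ℕ} (k : Fin (m + 1)) (γ : Bool)
    (b : Fin (m + 1) → Bool → P.X m) : Prop :=
  ∀ (j : Fin (m + 1)) (i : Fin m) (h : (j : ℕ) ≤ (i : ℕ)) (α β : Bool),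
    ((j, β) : Fin (m + 1) × Bool) ≠ (k, γ) →
    ((⟨(i : ℕ) + 1, by have := i.isLt; omega⟩, α) : Fin (m + 1) × Bool) ≠ (k, γ) →
    P.face i α (b j β) =
      P.face ⟨(j : ℕ), lt_of_le_of_lt h i.isLt⟩ β
        (b ⟨(i : ℕ) + 1, by have := i.isLt; omega⟩ α)

/-- `s` is an `(m+1)`-shell: a family of `m`-cubes indexed by all the face operations,
with `∂_i^α s_j^β = ∂_j^β s_{i+1}^α` for `i ≥ j`. -/
def SPS.IsShell (P : SPS) {m : ℕ} (s : Fin (m + 1) → Bool → P.X m) : Prop :=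
  ∀ (j : Fin (m + 1)) (i : Fin m) (h : (j : ℕ) ≤ (i : ℕ)) (α β : Bool),
    P.face i α (s j β) =
      P.face ⟨(j : ℕ), lt_of_le_of_lt h i.isLt⟩ β
        (s ⟨(i : ℕ) + 1, by have := i.isLt; omega⟩ α)

/-- The box `b` opposite `∂_k^γ` is admissible: `θ b` is thin for every non-identity
precubical operation `θ` complementary to `∂_k^γ`. -/
def SPS.AdmBox (P : SPS) {m : ℕ} (k : Fin (m + 1)) (γ : Bool)
    (b : Fin (m + 1) → Bool → P.X m) : Prop :=
  P.IsBox k γ b ∧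
  ∀ (p : ℕ × Bool) (L : List (ℕ × Bool)),
    ComplOp (m + 1) ((k : ℕ) + 1) γ (p :: L) → P.thin (P.apBoxAux b p L)

/-- The shell `s` is admissible: there are distinct, mutually non-complementary face
operations `∂_k^γ` and `∂_l^δ` with `s_k^γ = s_l^δ` such that the boxes obtained by
removing either are admissible. -/
def SPS.AdmShell (P : SPS) {m : ℕ} (s : Fin (m + 1) → Bool → P.X m) : Prop :=
  P.IsShell s ∧
  ∃ (k l : Fin (m + 1)) (γ δ : Bool),
    ((k, γ) : Fin (m + 1) × Bool) ≠ (l, δ) ∧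
    ¬ FaceComplOp (m + 1) ((k : ℕ) + 1) γ ((l : ℕ) + 1) δ ∧
    ¬ FaceComplOp (m + 1) ((l : ℕ) + 1) δ ((k : ℕ) + 1) γ ∧
    s k γ = s l δ ∧ P.AdmBox k γ s ∧ P.AdmBox l δ s

/-- `x` is a filler of the box `b` opposite `∂_k^γ`. -/
def SPS.FillsBox (P : SPS) {m : ℕ} (k : Fin (m + 1)) (γ : Bool)
    (b : Fin (m + 1) → Bool → P.X m) (x : P.X (m + 1)) : Prop :=
  ∀ (i : Fin (m + 1)) (α : Bool), ((i, α) : Fin (m + 1) × Bool) ≠ (k, γ) →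
    P.face i α x = b i α

/-- `x` is a filler of the shell `s`. -/
def SPS.FillsShell (P : SPS) {m : ℕ} (s : Fin (m + 1) → Bool → P.X m)
    (x : P.X (m + 1)) : Prop :=
  ∀ (i : Fin (m + 1)) (α : Bool), P.face i α x = s i α

/-- `P` is a *complete* stratified precubical set: every admissible box and every
admissible shell has a unique thin filler, and if `x` is the thin filler of an
admissible box `b` opposite `∂_k^γ` all of whose entries are thin, then the
additional face `∂_k^γ x` is thin as well. -/
def SPS.IsComplete (P : SPS) : Prop :=
  (∀ (m : ℕ) (k : Fin (m + 1)) (γ : Bool) (b : Fin (m + 1) → Bool → P.X m),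
     P.AdmBox k γ b → ∃! x : P.X (m + 1), P.thin x ∧ P.FillsBox k γ b x) ∧
  (∀ (m : ℕ) (s : Fin (m + 1) → Bool → P.X m),
     P.AdmShell s → ∃! x : P.X (m + 1), P.thin x ∧ P.FillsShell s x) ∧
  (∀ (m : ℕ) (k : Fin (m + 1)) (γ : Bool) (b : Fin (m + 1) → Bool → P.X m)
     (x : P.X (m + 1)),
     P.AdmBox k γ b → P.thin x → P.FillsBox k γ b x →
     (∀ (i : Fin (m + 1)) (α : Bool), ((i, α) : Fin (m + 1) × Bool) ≠ (k, γ) →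
        P.thin (b i α)) →
     P.thin (P.face k γ x))

/-- `E` is the system of degeneracy operations `ε` of a complete stratified precubical
set: `E n k x` (`x` an `n`-cube, `k : Fin (n+1)`, i.e. `ε_{k+1}` in 1-indexed notation)
is thin with faces `∂_i^α ε_k x = ε_{k-1} ∂_i^α x` for `i < k`, `∂_k^± ε_k x = x`,
and `∂_i^α ε_k x = ε_k ∂_{i-1}^α x` for `i > k`. -/
def SPS.IsDegSys (P : SPS) (E : ∀ n : ℕ, Fin (n + 1) → P.X n → P.X (n + 1)) : Prop :=
  (∀ (n : ℕ) (k : Fin (n + 1)) (x : P.X n), P.thin (E n k x)) ∧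
  (∀ (n : ℕ) (k : Fin (n + 1)) (α : Bool) (x : P.X n), P.face k α (E n k x) = x) ∧
  (∀ (n : ℕ) (k i : Fin (n + 2)) (α : Bool) (x : P.X (n + 1)) (h : (i : ℕ) < (k : ℕ)),
     P.face i α (E (n + 1) k x) =
       E n ⟨(k : ℕ) - 1, by have := k.isLt; omega⟩
         (P.face ⟨(i : ℕ), by have := k.isLt; omega⟩ α x)) ∧
  (∀ (n : ℕ) (k i : Fin (n + 2)) (α : Bool) (x : P.X (n + 1)) (h : (k : ℕ) < (i : ℕ)),
     P.face i α (E (n + 1) k x) =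
       E n ⟨(k : ℕ), by have := i.isLt; omega⟩
         (P.face ⟨(i : ℕ) - 1, by have := i.isLt; omega⟩ α x))

/-- `Γ` is the system of connection operations of a complete stratified precubical set
(`Γ n k γ x` for `x` an `(n+1)`-cube and `k : Fin (n+1)`, i.e. `Γ_{k+1}^γ`). -/
def SPS.IsConnSys (P : SPS) (E : ∀ n : ℕ, Fin (n + 1) → P.X n → P.X (n + 1))
    (Γ : ∀ n : ℕ, Fin (n + 1) → Bool → P.X (n + 1) → P.X (n + 2)) : Prop :=
  (∀ (n : ℕ) (k : Fin (n + 1)) (γ : Bool) (x : P.X (n + 1)), P.thin (Γ n k γ x)) ∧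
  (∀ (n : ℕ) (k : Fin (n + 1)) (γ : Bool) (x : P.X (n + 1)),
     P.face k.castSucc γ (Γ n k γ x) = x ∧ P.face k.succ γ (Γ n k γ x) = x) ∧
  (∀ (n : ℕ) (k : Fin (n + 1)) (γ : Bool) (x : P.X (n + 1)),
     P.face k.castSucc (!γ) (Γ n k γ x) = E n k (P.face k (!γ) x) ∧
     P.face k.succ (!γ) (Γ n k γ x) = E n k (P.face k (!γ) x)) ∧
  (∀ (n : ℕ) (k : Fin (n + 2)) (γ : Bool) (i : Fin (n + 3)) (α : Bool) (x : P.X (n + 2))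
     (h : (i : ℕ) < (k : ℕ)),
     P.face i α (Γ (n + 1) k γ x) =
       Γ n ⟨(k : ℕ) - 1, by have := k.isLt; omega⟩ γ
         (P.face ⟨(i : ℕ), by have := k.isLt; omega⟩ α x)) ∧
  (∀ (n : ℕ) (k : Fin (n + 2)) (γ : Bool) (i : Fin (n + 3)) (α : Bool) (x : P.X (n + 2))
     (h : (k : ℕ) + 1 < (i : ℕ)),
     P.face i α (Γ (n + 1) k γ x) =
       Γ n ⟨(k : ℕ), by have := i.isLt; omega⟩ γ
         (P.face ⟨(i : ℕ) - 1, by have := i.isLt; omega⟩ α x))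

/-- `G` is the system of composers of a complete stratified precubical set:
whenever `∂_k^+ x = ∂_k^- y`, the `(n+2)`-cube `G n k x y` is thin and has the faces
prescribed in the definition of the composer `G_k(x, y)` (all of them except the one
opposite `∂_k^-`). -/
def SPS.IsCompSys (P : SPS) (E : ∀ n : ℕ, Fin (n + 1) → P.X n → P.X (n + 1))
    (G : ∀ n : ℕ, Fin (n + 1) → P.X (n + 1) → P.X (n + 1) → P.X (n + 2)) : Prop :=
  (∀ (n : ℕ) (k : Fin (n + 1)) (x y : P.X (n + 1)),
     P.face k true x = P.face k false y → P.thin (G n k x y)) ∧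
  (∀ (n : ℕ) (k : Fin (n + 1)) (x y : P.X (n + 1)),
     P.face k true x = P.face k false y →
       P.face k.castSucc true (G n k x y) = y ∧
       P.face k.succ false (G n k x y) = x ∧
       P.face k.succ true (G n k x y) = E n k (P.face k true y)) ∧
  (∀ (n : ℕ) (k : Fin (n + 2)) (i : Fin (n + 3)) (α : Bool) (x y : P.X (n + 2)),
     P.face k true x = P.face k false y → ∀ h : (i : ℕ) < (k : ℕ),
     P.face i α (G (n + 1) k x y) =
       G n ⟨(k : ℕ) - 1, by have := k.isLt; omega⟩
         (P.face ⟨(i : ℕ), by have := k.isLt; omega⟩ α x)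
         (P.face ⟨(i : ℕ), by have := k.isLt; omega⟩ α y)) ∧
  (∀ (n : ℕ) (k : Fin (n + 2)) (i : Fin (n + 3)) (α : Bool) (x y : P.X (n + 2)),
     P.face k true x = P.face k false y → ∀ h : (k : ℕ) + 1 < (i : ℕ),
     P.face i α (G (n + 1) k x y) =
       G n ⟨(k : ℕ), by have := i.isLt; omega⟩
         (P.face ⟨(i : ℕ) - 1, by have := i.isLt; omega⟩ α x)
         (P.face ⟨(i : ℕ) - 1, by have := i.isLt; omega⟩ α y))

/-- The composite `x ∘_k y = ∂_k^- G_k(x, y)`. -/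
def SPS.cmp (P : SPS) (G : ∀ n : ℕ, Fin (n + 1) → P.X (n + 1) → P.X (n + 1) → P.X (n + 2))
    {n : ℕ} (k : Fin (n + 1)) (x y : P.X (n + 1)) : P.X (n + 1) :=
  P.face k.castSucc false (G n k x y)
/-!
`G_k(x, y)` is a thin filler of the box of its own faces opposite `∂_k^-`, and `x ∘_k y` is
the missing face, so by the last completeness axiom it suffices that the other faces are thin
and that the box is admissible. Those faces are lower-dimensional composers, `x`, `y` and
`ε_k ∂_k^+ y`. For admissibility, peel off the innermost factor `∂_q^β` of an operation
complementary to `∂_k^-`: for `q < k` or `q > k + 1` the face is again a composer and the rest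
of the operation stays complementary; `q = k` is excluded; and for `q = k + 1` the sign
condition forces `β = +`, giving the degeneracy `ε_k ∂_k^+ y`, on which every standard
operation with indices `< k` yields a degeneracy again.
-/

section Lists

theorem insSorted_cons_of_le {a p : ℕ × Bool} (L : List (ℕ × Bool)) (h : a.1 ≤ p.1) :
    insSorted a (p :: L) = a :: p :: L := by
  simp only [insSorted, if_pos h]

theorem insSorted_cons_of_lt {a p : ℕ × Bool} (L : List (ℕ × Bool)) (h : p.1 < a.1) :
    insSorted a (p :: L) = p :: insSorted a L := by
  simp only [insSorted, if_neg (Nat.not_le.mpr h)]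

theorem insSorted_append_of_lt {a : ℕ × Bool} {L : List (ℕ × Bool)} (M : List (ℕ × Bool))
    (hL : ∀ p ∈ L, p.1 < a.1) : insSorted a (L ++ M) = L ++ insSorted a M := by
  induction L with
  | nil => rfl
  | cons p L ih =>
    rw [List.cons_append, insSorted_cons_of_lt _ (hL p List.mem_cons_self),
      ih fun p hp => hL p (List.mem_cons_of_mem _ hp), List.cons_append]

theorem insSorted_of_forall_lt {a : ℕ × Bool} {L : List (ℕ × Bool)}
    (hL : ∀ p ∈ L, p.1 < a.1) : insSorted a L = L ++ [a] := by
  simpa [insSorted] using insSorted_append_of_lt [] hL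

theorem insSorted_append_singleton_of_le {a q : ℕ × Bool} (L : List (ℕ × Bool))
    (h : a.1 ≤ q.1) : insSorted a (L ++ [q]) = insSorted a L ++ [q] := by
  induction L with
  | nil => exact insSorted_cons_of_le [] h
  | cons p L ih =>
    by_cases hap : a.1 ≤ p.1
    · simp only [List.cons_append, insSorted_cons_of_le _ hap]
    · rw [List.cons_append, insSorted_cons_of_lt _ (Nat.lt_of_not_le hap),
        insSorted_cons_of_lt _ (Nat.lt_of_not_le hap), ih, List.cons_append]

theorem IsStdList.lt_of_append_singleton {n : ℕ} {L : List (ℕ × Bool)} {q : ℕ × Bool}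
    (h : IsStdList n (L ++ [q])) : ∀ p ∈ L, p.1 < q.1 := by
  have hpw := ((List.isChain_map (R := (· < ·)) Prod.fst).2 h.1).pairwise
  rw [List.pairwise_map, List.pairwise_append] at hpw
  exact fun p hp => hpw.2.2 p hp q List.mem_cons_self

theorem IsStdList.of_append_singleton {n n' : ℕ} {L : List (ℕ × Bool)} {q : ℕ × Bool}
    (h : IsStdList n (L ++ [q])) (hq : q.1 ≤ n' + 1) : IsStdList n' L := by
  refine ⟨List.IsChain.left_of_append h.1, fun p hp => ?_⟩
  have := h.2 p (List.mem_append_left _ hp)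
  have := h.lt_of_append_singleton p hp
  omega

theorem ConstSign.of_append {L M : List (ℕ × Bool)} (h : ConstSign (L ++ M)) :
    ConstSign L := by
  obtain ⟨ε, hε⟩ := h
  refine ⟨ε, fun t ht => ?_⟩
  simpa [List.getElem_append_left ht] using hε t (by simp; omega)

/-- The weight `(−1)^{i−r} α` of a factor only depends on the parity of `i − r`. -/
theorem ConstSign.shift {L : List (ℕ × Bool)} {a : ℕ × Bool} {c : ℕ} {β : Bool}
    (h : ConstSign (L ++ [a, (c + 1, β)])) : ConstSign (L ++ [(c, β)]) := by
  obtain ⟨ε, hε⟩ := h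
  refine ⟨ε, fun t ht => ?_⟩
  rcases Nat.lt_or_ge t L.length with htL | htL
  · simpa [List.getElem_append_left htL] using hε t (by simp; omega)
  · obtain rfl : t = L.length := by simp at ht; omega
    have hlast := hε (L.length + 1) (by simp)
    simp only [List.get_eq_getElem, List.getElem_append_right, le_add_iff_nonneg_right, zero_le,
      le_refl, add_tsub_cancel_left, tsub_self, List.getElem_cons_succ,
      List.getElem_cons_zero] at hlast ⊢
    rw [← hlast]
    ring

theorem ConstSign.sign_eq_of_consecutive {L : List (ℕ × Bool)} {c : ℕ} {β β' : Bool}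
    (h : ConstSign (L ++ [(c, β), (c + 1, β')])) : β' = β := by
  obtain ⟨ε, hε⟩ := h
  have h₁ := hε L.length (by simp)
  have h₂ := hε (L.length + 1) (by simp)
  simp only [List.get_eq_getElem, List.getElem_append_right, le_add_iff_nonneg_right, zero_le,
    le_refl, add_tsub_cancel_left, tsub_self, List.getElem_cons_succ,
    List.getElem_cons_zero] at h₁ h₂
  have hpow : (-1 : ℤ) ^ (c + 1 + (L.length + 1) + 1) = (-1) ^ (c + L.length + 1) := by ring
  rw [← h₁, hpow] at h₂
  have hsgn := mul_left_cancel₀ (pow_ne_zero _ (by norm_num)) h₂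
  cases β <;> cases β' <;> simp [sgn] at hsgn ⊢

variable {n K : ℕ} {γ : Bool} {L : List (ℕ × Bool)} {q : ℕ × Bool}

theorem ComplOp.of_append_singleton_of_le (h : ComplOp (n + 1) (K + 1) γ (L ++ [q]))
    (hq : q.1 ≤ K) : ComplOp n K γ L := by
  obtain ⟨hstd, havoid, hsign⟩ := h
  have hlt : ∀ p ∈ L, p.1 < K := fun p hp => by have := hstd.lt_of_append_singleton p hp; omega
  have hqn := (hstd.2 q (by simp)).2
  refine ⟨hstd.of_append_singleton (by omega), fun p hp => (hlt p hp).ne, ?_⟩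
  rw [insSorted_append_of_lt _ fun p hp => Nat.lt_succ_of_lt (hlt p hp),
    insSorted_cons_of_lt _ (Nat.lt_succ_of_le hq)] at hsign
  rw [insSorted_of_forall_lt hlt]
  exact hsign.shift

theorem ComplOp.of_append_singleton_of_lt (h : ComplOp (n + 1) K γ (L ++ [q]))
    (hq : K < q.1) : ComplOp n K γ L := by
  obtain ⟨hstd, havoid, hsign⟩ := h
  refine ⟨hstd.of_append_singleton (hstd.2 q (by simp)).2,
    fun p hp => havoid p (List.mem_append_left _ hp), ?_⟩
  rw [insSorted_append_singleton_of_le _ hq.le] at hsign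
  exact hsign.of_append

theorem ComplOp.of_append_succ_succ {β : Bool}
    (h : ComplOp n (K + 1) γ (L ++ [(K + 2, β)])) : β = !γ ∧ IsStdList K L := by
  obtain ⟨hstd, havoid, hsign⟩ := h
  have hlt := hstd.lt_of_append_singleton
  rw [insSorted_append_of_lt _ fun p hp => by
      have : p.1 < K + 2 := hlt p hp; have := havoid p (by simp [hp]); simp only; omega,
    insSorted_cons_of_le _ (by simp)] at hsign
  refine ⟨hsign.sign_eq_of_consecutive, List.IsChain.left_of_append hstd.1, fun p hp => ?_⟩
  have := hstd.2 p (List.mem_append_left _ hp)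
  have : p.1 < K + 2 := hlt p hp
  have := havoid p (List.mem_append_left _ hp)
  omega

end Lists

namespace SPS

variable (P : SPS)

/-- Cubes of all dimensions are packed into a sigma type, so that a list of 1-indexed face
operations (outermost first, as in `apBoxAux`) can act on them by folding. -/
def faceS (p : ℕ × Bool) (w : Σ n, P.X n) : Σ n, P.X n :=
  ⟨w.1 - 1, P.faceN p.1 p.2 w.2⟩

def facesS (L : List (ℕ × Bool)) (w : Σ n, P.X n) : Σ n, P.X n :=
  L.foldr P.faceS w

variable {P}

theorem facesS_append_singleton (L : List (ℕ × Bool)) (q : ℕ × Bool) (w : Σ n, P.X n) :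
    P.facesS (L ++ [q]) w = P.facesS L (P.faceS q w) := by
  simp [facesS, List.foldr_append]

theorem faceS_mk_eq {m : ℕ} (q : ℕ × Bool) (x : P.X (m + 1)) (j : Fin (m + 1))
    (hj : (j : ℕ) + 1 = q.1) : P.faceS q ⟨m + 1, x⟩ = ⟨m, P.face j q.2 x⟩ := by
  have hj' : (⟨min (q.1 - 1) m, Nat.lt_succ_of_le (Nat.min_le_right _ _)⟩ : Fin (m + 1)) = j :=
    Fin.ext (by simp only; omega)
  simp only [faceS, faceN, hj']
  rfl

theorem apBoxAux_faces_eq_facesS {m : ℕ} (g : P.X (m + 1)) (p : ℕ × Bool)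
    (L : List (ℕ × Bool)) :
    (⟨m - L.length, P.apBoxAux (fun i α => P.face i α g) p L⟩ : Σ n, P.X n) =
      P.facesS (p :: L) ⟨m + 1, g⟩ := by
  induction L generalizing p with
  | nil => rfl
  | cons q L ih =>
    change _ = P.faceS p (P.facesS (q :: L) ⟨m + 1, g⟩)
    rw [← ih q]
    rfl

theorem isShell_faces {m : ℕ} (g : P.X (m + 1)) : P.IsShell fun i α => P.face i α g :=
  fun j i h α β => P.face_rel j i h α β g

theorem IsShell.isBox {m : ℕ} {s : Fin (m + 1) → Bool → P.X m} (hs : P.IsShell s)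
    (k : Fin (m + 1)) (γ : Bool) : P.IsBox k γ s :=
  fun j i h α β _ _ => hs j i h α β

theorem admBox_faces {m : ℕ} {k : Fin (m + 1)} {γ : Bool} {g : P.X (m + 1)}
    (hg : ∀ p L, ComplOp (m + 1) ((k : ℕ) + 1) γ (p :: L) →
      P.thin (P.facesS (p :: L) ⟨m + 1, g⟩).2) :
    P.AdmBox k γ fun i α => P.face i α g := by
  refine ⟨(isShell_faces g).isBox k γ, fun p L hθ => ?_⟩
  have := hg p L hθ
  rwa [← apBoxAux_faces_eq_facesS] at this

theorem composable_face_of_lt {m : ℕ} {k : Fin (m + 2)} {x y : P.X (m + 2)}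
    (h : P.face k true x = P.face k false y) {i : Fin (m + 2)} {k' : Fin (m + 1)}
    (hk' : (k' : ℕ) + 1 = k) (hi : (i : ℕ) ≤ k') (α : Bool) :
    P.face k' true (P.face i α x) = P.face k' false (P.face i α y) := by
  have hk : (⟨(k' : ℕ) + 1, by omega⟩ : Fin (m + 2)) = k := Fin.ext hk'
  rw [P.face_rel i k' hi, P.face_rel i k' hi, hk, h]

theorem composable_face_of_gt {m : ℕ} {k : Fin (m + 2)} {x y : P.X (m + 2)}
    (h : P.face k true x = P.face k false y) {j : Fin (m + 2)} {k' : Fin (m + 1)}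
    (hk' : (k' : ℕ) = k) (hj : k < j) (α : Bool) :
    P.face k' true (P.face j α x) = P.face k' false (P.face j α y) := by
  obtain ⟨_ | i, hi⟩ := j
  · exact absurd hj (Fin.not_lt_zero k)
  have hki : (k : ℕ) ≤ i := Nat.lt_succ_iff.mp hj
  have hk : (⟨(k : ℕ), by omega⟩ : Fin (m + 1)) = k' := Fin.ext hk'.symm
  calc P.face k' true (P.face ⟨i + 1, hi⟩ α x)
      = P.face (⟨i, by omega⟩ : Fin (m + 1)) α (P.face k true x) :=
        hk ▸ (P.face_rel k ⟨i, by omega⟩ hki α true x).symm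
    _ = P.face k' false (P.face ⟨i + 1, hi⟩ α y) :=
        h ▸ hk ▸ P.face_rel k ⟨i, by omega⟩ hki α false y

variable {E : ∀ n : ℕ, Fin (n + 1) → P.X n → P.X (n + 1)}

theorem IsDegSys.thin_facesS (hE : P.IsDegSys E) {θ : List (ℕ × Bool)} :
    ∀ {m : ℕ} {k : Fin (m + 1)} (z : P.X m), IsStdList k θ →
      P.thin (P.facesS θ ⟨m + 1, E m k z⟩).2 := by
  induction θ using List.reverseRecOn with
  | nil => exact fun z _ => hE.1 _ _ z
  | append_singleton L q ih =>
    intro m k z hθ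
    have hq := hθ.2 q (by simp)
    obtain ⟨m, rfl⟩ : ∃ m', m = m' + 1 := ⟨m - 1, by omega⟩
    rw [facesS_append_singleton, faceS_mk_eq q _ ⟨q.1 - 1, by omega⟩ (by simp; omega),
      hE.2.2.1 m k _ q.2 z (by simp; omega)]
    exact ih _ (hθ.of_append_singleton (by simp; omega))

variable {G : ∀ n : ℕ, Fin (n + 1) → P.X (n + 1) → P.X (n + 1) → P.X (n + 2)}

theorem IsCompSys.thin_facesS (hE : P.IsDegSys E) (hG : P.IsCompSys E G)
    {θ : List (ℕ × Bool)} :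
    ∀ {m : ℕ} {k : Fin (m + 1)} {x y : P.X (m + 1)}, P.face k true x = P.face k false y →
      ComplOp (m + 2) ((k : ℕ) + 1) false θ → P.thin (P.facesS θ ⟨m + 2, G m k x y⟩).2 := by
  induction θ using List.reverseRecOn with
  | nil => exact fun h _ => hG.1 _ _ _ _ h
  | append_singleton L q ih =>
    intro m k x y h hθ
    have hq := hθ.1.2 q (by simp)
    have hqk := hθ.2.1 q (by simp)
    rw [facesS_append_singleton]
    rcases (by omega : q.1 ≤ k ∨ q.1 = k + 2 ∨ k + 2 < q.1) with hlo | hmid | hhi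
    · obtain ⟨m, rfl⟩ : ∃ m', m = m' + 1 := ⟨m - 1, by omega⟩
      rw [faceS_mk_eq q _ ⟨q.1 - 1, by omega⟩ (by simp; omega),
        hG.2.2.1 m k _ q.2 x y h (by simp; omega)]
      refine ih (composable_face_of_lt h (by simp; omega) (by simp; omega) q.2) ?_
      have hk : (k : ℕ) - 1 + 1 = k := by omega
      simpa only [Fin.val_mk, hk] using hθ.of_append_singleton_of_le hlo
    · obtain ⟨_, β⟩ := q
      obtain rfl : _ = (k : ℕ) + 2 := hmid
      obtain ⟨hβ, hL⟩ := hθ.of_append_succ_succ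
      obtain rfl : β = true := hβ
      rw [faceS_mk_eq _ _ k.succ (by simp), (hG.2.1 m k x y h).2.2]
      exact hE.thin_facesS _ hL
    · obtain ⟨m, rfl⟩ : ∃ m', m = m' + 1 := ⟨m - 1, by omega⟩
      rw [faceS_mk_eq q _ ⟨q.1 - 1, by omega⟩ (by simp; omega),
        hG.2.2.2 m k _ q.2 x y h (by simp; omega)]
      exact ih (composable_face_of_gt h rfl (by simp [Fin.lt_def]; omega) q.2)
        (hθ.of_append_singleton_of_lt (by omega))

theorem IsCompSys.thin_face (hE : P.IsDegSys E) (hG : P.IsCompSys E G) {n : ℕ}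
    {k : Fin (n + 1)} {x y : P.X (n + 1)} (h : P.face k true x = P.face k false y)
    (hx : P.thin x) (hy : P.thin y) (i : Fin (n + 2)) (α : Bool)
    (hne : ((i, α) : Fin (n + 2) × Bool) ≠ (k.castSucc, false)) :
    P.thin (P.face i α (G n k x y)) := by
  rcases (by omega : (i : ℕ) < k ∨ (i : ℕ) = k ∨ (i : ℕ) = k + 1 ∨ (k : ℕ) + 1 < i)
    with hlt | heq | hsucc | hgt
  · obtain ⟨n, rfl⟩ : ∃ n', n = n' + 1 := ⟨n - 1, by omega⟩
    rw [hG.2.2.1 n k i α x y h hlt]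
    exact hG.1 _ _ _ _ (composable_face_of_lt h (by simp; omega) (by simp; omega) α)
  · obtain rfl : i = k.castSucc := Fin.ext heq
    obtain rfl : α = true := by simpa using hne
    rw [(hG.2.1 n k x y h).1]
    exact hy
  · obtain rfl : i = k.succ := Fin.ext hsucc
    cases α
    · rw [(hG.2.1 n k x y h).2.1]
      exact hx
    · rw [(hG.2.1 n k x y h).2.2]
      exact hE.1 _ _ _
  · obtain ⟨n, rfl⟩ : ∃ n', n = n' + 1 := ⟨n - 1, by omega⟩
    rw [hG.2.2.2 n k i α x y h hgt]
    exact hG.1 _ _ _ _ (composable_face_of_gt h rfl (by simp [Fin.lt_def]; omega) α)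

end SPS

/-- in a complete stratified precubical set, if `x ∘_k y` is a composite
such that `x` and `y` are thin, then `x ∘_k y` is thin. -/
theorem comp_of_thin_is_thin (P : SPS) (hP : P.IsComplete)
    (E : ∀ n : ℕ, Fin (n + 1) → P.X n → P.X (n + 1)) (hE : P.IsDegSys E)
    (G : ∀ n : ℕ, Fin (n + 1) → P.X (n + 1) → P.X (n + 1) → P.X (n + 2))
    (hG : P.IsCompSys E G)
    (n : ℕ) (k : Fin (n + 1)) (x y : P.X (n + 1))
    (h : P.face k true x = P.face k false y)
    (hx : P.thin x) (hy : P.thin y) :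
    P.thin (P.cmp G k x y) := by
  have hadm : P.AdmBox k.castSucc false fun i α => P.face i α (G n k x y) :=
    SPS.admBox_faces fun _ _ hθ => hG.thin_facesS hE h hθ
  exact hP.2.2 (n + 1) k.castSucc false _ (G n k x y) hadm (hG.1 n k x y h)
    (fun _ _ _ => rfl) (hG.thin_face hE h hx hy)

end CubicalNerve
end

section
/- In a complete stratified precubical set the degeneracies satisfy ε_k ε_l x = ε_{l+1} ε_k x for k ≤ l. -/
namespace CubicalNerve

/-!
Both sides are thin cubes with the same faces, the faces agreeing by induction on the
dimension. Thin cubes with the shell of a degenerate cube `ε_k z` coincide: that shell is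
admissible, since its faces `∂_k^±` are both `z`, and every operation complementary to
`∂_k^γ` avoids the index `k`, so it takes `ε_k z` to a cube that is still degenerate in
some direction, hence thin.
-/

namespace SPS

variable {P : SPS} {E : ∀ n : ℕ, Fin (n + 1) → P.X n → P.X (n + 1)}

theorem IsDegSys.thin (hE : P.IsDegSys E) {n : ℕ} (k : Fin (n + 1)) (x : P.X n) :
    P.thin (E n k x) :=
  hE.1 n k x

theorem IsDegSys.face_self (hE : P.IsDegSys E) {n k : ℕ} (hk : k < n + 1) (α : Bool)
    (x : P.X n) : P.face ⟨k, hk⟩ α (E n ⟨k, hk⟩ x) = x :=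
  hE.2.1 n ⟨k, hk⟩ α x

theorem IsDegSys.face_of_le (hE : P.IsDegSys E) {n i k : ℕ} (hik : i ≤ k) (hk : k < n + 1)
    (α : Bool) (x : P.X (n + 1)) :
    P.face (n := n + 2) ⟨i, by omega⟩ α (E (n + 1) ⟨k + 1, by omega⟩ x) =
      E n ⟨k, hk⟩ (P.face ⟨i, by omega⟩ α x) :=
  hE.2.2.1 n ⟨k + 1, by omega⟩ ⟨i, by omega⟩ α x (by simp only; omega)

theorem IsDegSys.face_of_ge (hE : P.IsDegSys E) {n i k : ℕ} (hki : k ≤ i) (hi : i < n + 1)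
    (α : Bool) (x : P.X (n + 1)) :
    P.face (n := n + 2) ⟨i + 1, by omega⟩ α (E (n + 1) ⟨k, by omega⟩ x) =
      E n ⟨k, by omega⟩ (P.face ⟨i, hi⟩ α x) :=
  hE.2.2.2 n ⟨k, by omega⟩ ⟨i + 1, by omega⟩ α x (by simp only; omega)

theorem faceN_succ {n i : ℕ} (hi : i < n + 1) (α : Bool) (y : P.X (n + 1)) :
    P.faceN (i + 1) α y = P.face ⟨i, hi⟩ α y := by
  show P.face _ α y = _
  congr
  simp only [Nat.add_sub_cancel]
  omega

theorem faceN_heq {d₁ d₂ : ℕ} (hd : d₁ = d₂) {x : P.X d₁} {y : P.X d₂} (hxy : x ≍ y)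
    (i : ℕ) (α : Bool) : P.faceN i α x ≍ P.faceN i α y := by
  subst hd
  cases hxy
  rfl

theorem of_heq (Φ : ∀ {d : ℕ}, P.X d → Prop) {d₁ d₂ : ℕ} (hd : d₁ = d₂) {x : P.X d₁}
    {y : P.X d₂} (hxy : x ≍ y) (hy : Φ y) : Φ x := by
  subst hd
  cases hxy
  exact hy

/-- The composite of the face operations listed in `L`, the last entry applied first. -/
def applyFaces (P : SPS) : (L : List (ℕ × Bool)) → ∀ {d : ℕ}, P.X d → P.X (d - L.length)
  | [], _, y => y
  | p :: L, _, y => P.faceN p.1 p.2 (applyFaces P L y)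

theorem applyFaces_append_singleton (L : List (ℕ × Bool)) (q : ℕ × Bool) {d : ℕ}
    (y : P.X d) : P.applyFaces (L ++ [q]) y ≍ P.applyFaces L (P.faceN q.1 q.2 y) := by
  induction L with
  | nil => rfl
  | cons p L ih =>
    exact faceN_heq (by simp only [List.length_append, List.length_singleton]; omega) ih p.1 p.2

theorem apBoxAux_faces_heq {m : ℕ} (y : P.X (m + 1)) (p : ℕ × Bool) (L : List (ℕ × Bool)) :
    P.apBoxAux (fun i α => P.face i α y) p L ≍ P.applyFaces (p :: L) y := by
  induction L generalizing p with
  | nil => rfl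
  | cons q L ih => exact faceN_heq (by simp) (ih q) p.1 p.2

/-- `y = ε_{a+1} z` for some `z` (the direction `a` is 0-indexed); `0`-cubes are never
degenerate. -/
def IsDegAt (E : ∀ n : ℕ, Fin (n + 1) → P.X n → P.X (n + 1)) (a : ℕ) :
    ∀ {d : ℕ}, P.X d → Prop
  | 0, _ => False
  | e + 1, y => ∃ (ha : a < e + 1) (z : P.X e), y = E e ⟨a, ha⟩ z

theorem IsDegAt.thin (hE : P.IsDegSys E) {a d : ℕ} {y : P.X d} (hy : IsDegAt E a y) :
    P.thin y := by
  cases d with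
  | zero => exact hy.elim
  | succ e =>
    obtain ⟨ha, z, rfl⟩ := hy
    exact hE.thin _ z

theorem IsDegAt.faceN_of_le (hE : P.IsDegSys E) {a d i : ℕ} {y : P.X d}
    (hy : IsDegAt E (a + 1) y) (hi₁ : 1 ≤ i) (hi₂ : i ≤ a + 1) (α : Bool) :
    IsDegAt E a (P.faceN i α y) := by
  obtain _ | _ | e := d
  · exact hy.elim
  · obtain ⟨ha, -⟩ := hy
    simp at ha
  · obtain ⟨ha, z, rfl⟩ := hy
    obtain ⟨i, rfl⟩ : ∃ i', i = i' + 1 := ⟨i - 1, by omega⟩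
    rw [faceN_succ (by omega), hE.face_of_le (by omega) (by omega)]
    exact ⟨_, _, rfl⟩

theorem IsDegAt.faceN_of_lt (hE : P.IsDegSys E) {a d i : ℕ} {y : P.X d}
    (hy : IsDegAt E a y) (hai : a + 1 < i) (hid : i ≤ d) (α : Bool) :
    IsDegAt E a (P.faceN i α y) := by
  obtain _ | _ | e := d
  · exact hy.elim
  · omega
  · obtain ⟨ha, z, rfl⟩ := hy
    obtain ⟨i, rfl⟩ : ∃ i', i = i' + 2 := ⟨i - 2, by omega⟩
    rw [faceN_succ (by omega), hE.face_of_ge (by omega) (by omega)]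
    exact ⟨_, _, rfl⟩

theorem IsDegAt.applyFaces (hE : P.IsDegSys E) (L : List (ℕ × Bool)) {a d : ℕ} {y : P.X d}
    (hy : IsDegAt E a y) (hL : L.Pairwise fun p q => p.1 < q.1)
    (hmem : ∀ p ∈ L, 1 ≤ p.1 ∧ p.1 ≤ d ∧ p.1 ≠ a + 1) :
    ∃ a', IsDegAt E a' (P.applyFaces L y) := by
  induction L using List.reverseRecOn generalizing a d y with
  | nil => exact ⟨a, hy⟩
  | append_singleton L q ih =>
    obtain ⟨hL, -, hlast⟩ := List.pairwise_append.mp hL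
    have hq := hmem q (by simp)
    have hbound : ∀ p ∈ L, 1 ≤ p.1 ∧ p.1 < q.1 ∧ p.1 ≠ a + 1 := fun p hp =>
      ⟨(hmem p (by simp [hp])).1, hlast p hp q (by simp), (hmem p (by simp [hp])).2.2⟩
    obtain ⟨a', hface, hmem'⟩ : ∃ a', IsDegAt E a' (P.faceN q.1 q.2 y) ∧
        ∀ p ∈ L, 1 ≤ p.1 ∧ p.1 ≤ d - 1 ∧ p.1 ≠ a' + 1 := by
      by_cases hqa : q.1 ≤ a
      · obtain ⟨a', rfl⟩ : ∃ a', a = a' + 1 := ⟨a - 1, by omega⟩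
        refine ⟨a', hy.faceN_of_le hE hq.1 hqa q.2, fun p hp => ?_⟩
        have := hbound p hp
        omega
      · refine ⟨a, hy.faceN_of_lt hE (by omega) hq.2.1 q.2, fun p hp => ?_⟩
        have := hbound p hp
        omega
    obtain ⟨a'', h⟩ := ih hface hL hmem'
    have hdim : d - (L ++ [q]).length = d - 1 - L.length := by
      simp only [List.length_append, List.length_singleton]
      omega
    exact ⟨a'', of_heq (IsDegAt E a'') hdim (applyFaces_append_singleton L q y) h⟩

theorem admBox_faces_deg (hE : P.IsDegSys E) {m : ℕ} (k : Fin (m + 1)) (γ : Bool)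
    (z : P.X m) : P.AdmBox k γ (fun i α => P.face i α (E m k z)) := by
  refine ⟨fun j i hij α β _ _ => P.face_rel j i hij α β _, ?_⟩
  rintro p L ⟨⟨hchain, hbound⟩, hne, -⟩
  have hdeg : IsDegAt E k (E m k z) := ⟨k.isLt, z, rfl⟩
  obtain ⟨a, ha⟩ := hdeg.applyFaces hE (p :: L) (List.isChain_iff_pairwise.mp hchain)
    fun q hq => ⟨(hbound q hq).1, (hbound q hq).2, hne q hq⟩
  exact of_heq P.thin (by simp) (apBoxAux_faces_heq _ p L) (ha.thin hE)

theorem admShell_faces_deg (hE : P.IsDegSys E) {m : ℕ} (k : Fin (m + 1)) (z : P.X m) :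
    P.AdmShell (fun i α => P.face i α (E m k z)) := by
  refine ⟨fun j i hij α β => P.face_rel j i hij α β _, k, k, false, true, by simp,
    ?_, ?_, ?_, admBox_faces_deg hE k false z, admBox_faces_deg hE k true z⟩
  · rintro ⟨-, hne, -⟩
    exact hne _ (List.mem_singleton_self _) rfl
  · rintro ⟨-, hne, -⟩
    exact hne _ (List.mem_singleton_self _) rfl
  · exact (hE.face_self k.isLt false z).trans (hE.face_self k.isLt true z).symm

theorem eq_deg_of_thin_of_faces (hP : P.IsComplete) (hE : P.IsDegSys E) {m : ℕ}
    {k : Fin (m + 1)} {z : P.X m} {y : P.X (m + 1)} (hy : P.thin y)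
    (hfaces : ∀ i α, P.face i α y = P.face i α (E m k z)) : y = E m k z :=
  (hP.2.1 m _ (admShell_faces_deg hE k z)).unique ⟨hy, hfaces⟩
    ⟨hE.thin k z, fun _ _ => rfl⟩

theorem deg_deg_of_le (hP : P.IsComplete) (hE : P.IsDegSys E) {n a b : ℕ} (hab : a ≤ b)
    (hb : b < n + 1) (x : P.X n) :
    E (n + 1) ⟨a, by omega⟩ (E n ⟨b, hb⟩ x) =
      E (n + 1) ⟨b + 1, by omega⟩ (E n ⟨a, by omega⟩ x) := by
  induction n using Nat.strong_induction_on generalizing a b with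
  | _ n ih =>
    refine (eq_deg_of_thin_of_faces hP hE (hE.thin _ _) ?_).symm
    -- the faces at `a` and `b + 1` are computed directly, the others are an instance of
    -- the identity one dimension down
    rintro ⟨i, hi⟩ α
    rcases lt_trichotomy i a with hia | rfl | hai
    · obtain ⟨a, rfl⟩ : ∃ a', a = a' + 1 := ⟨a - 1, by omega⟩
      obtain ⟨b, rfl⟩ : ∃ b', b = b' + 1 := ⟨b - 1, by omega⟩
      obtain ⟨m, rfl⟩ : ∃ m, n = m + 1 := ⟨n - 1, by omega⟩
      rw [hE.face_of_le (by omega) (by omega), hE.face_of_le (by omega) (by omega),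
        hE.face_of_le (by omega) (by omega), hE.face_of_le (by omega) (by omega)]
      exact (ih m (by omega) (by omega) (by omega) _).symm
    · rw [hE.face_self, hE.face_of_le hab hb, hE.face_self]
    rcases lt_trichotomy i (b + 1) with hib | rfl | hbi
    · obtain ⟨i, rfl⟩ : ∃ i', i = i' + 1 := ⟨i - 1, by omega⟩
      obtain ⟨b, rfl⟩ : ∃ b', b = b' + 1 := ⟨b - 1, by omega⟩
      obtain ⟨m, rfl⟩ : ∃ m, n = m + 1 := ⟨n - 1, by omega⟩
      rw [hE.face_of_le (by omega) (by omega), hE.face_of_ge (by omega) (by omega),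
        hE.face_of_ge (by omega) (by omega), hE.face_of_le (by omega) (by omega)]
      exact (ih m (by omega) (by omega) (by omega) _).symm
    · rw [hE.face_self, hE.face_of_ge hab hb, hE.face_self]
    · obtain ⟨i, rfl⟩ : ∃ i', i = i' + 2 := ⟨i - 2, by omega⟩
      obtain ⟨m, rfl⟩ : ∃ m, n = m + 1 := ⟨n - 1, by omega⟩
      rw [hE.face_of_ge (by omega) (by omega), hE.face_of_ge (by omega) (by omega),
        hE.face_of_ge (by omega) (by omega), hE.face_of_ge (by omega) (by omega)]
      exact (ih m (by omega) (by omega) (by omega) _).symm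

end SPS

/-- in a complete stratified precubical set the degeneracies satisfy
`ε_k ε_l x = ε_{l+1} ε_k x` for `k ≤ l`. -/
theorem deg_deg (P : SPS) (hP : P.IsComplete)
    (E : ∀ n : ℕ, Fin (n + 1) → P.X n → P.X (n + 1)) (hE : P.IsDegSys E)
    (n : ℕ) (l : Fin (n + 1)) (k : Fin (n + 2)) (h : (k : ℕ) ≤ (l : ℕ)) (x : P.X n) :
    E (n + 1) k (E n l x) =
      E (n + 1) l.succ (E n ⟨(k : ℕ), by have := l.isLt; omega⟩ x) :=
  SPS.deg_deg_of_le hP hE h l.isLt x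

end CubicalNerve
end

section
/- In a complete stratified precubical set, if the composite x ∘_k y of n-cubes is defined (∂_k^+x = ∂_k^−y), then ∂_i^α(x ∘_k y) = ∂_i^α x ∘_{k−1} ∂_i^α y for i < k; ∂_k^−(x ∘_k y) = ∂_k^− x; ∂_k^+(x ∘_k y) = ∂_k^+ y; and ∂_i^α(x ∘_k y) = ∂_i^α x ∘_k ∂_i^α y for i > k. -/
namespace CubicalNerve

/-!
The composite `x ∘_k y` is the face `∂_k^-` of the composer `G_k(x, y)`. By the precubical
identities every face of it is a face `∂_k^-` or `∂_{k-1}^-` of a face of `G_k(x, y)` other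
than `∂_k^-`, and those faces are prescribed by the box that `G_k(x, y)` fills; for instance
`∂_k^+ (x ∘_k y) = ∂_k^- ∂_{k+1}^+ G_k(x, y) = ∂_k^- ε_k ∂_k^+ y = ∂_k^+ y`.
-/

theorem SPS.face_face (P : SPS) {n : ℕ} (i : Fin (n + 1)) (j : Fin (n + 2))
    (h : (j : ℕ) ≤ i) (α β : Bool) (x : P.X (n + 2)) :
    P.face i α (P.face j β x) = P.face (j.castLT (by omega)) β (P.face i.succ α x) :=
  P.face_rel j i h α β x

section Composite

variable {P : SPS} {E : ∀ n : ℕ, Fin (n + 1) → P.X n → P.X (n + 1)}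
  {G : ∀ n : ℕ, Fin (n + 1) → P.X (n + 1) → P.X (n + 1) → P.X (n + 2)}

theorem SPS.face_cmp_self (α : Bool) {n : ℕ} (k : Fin (n + 1)) (x y : P.X (n + 1)) :
    P.face k α (P.cmp G k x y) = P.face k false (P.face k.succ α (G n k x y)) := by
  simp only [SPS.cmp, P.face_face k k.castSucc le_rfl, Fin.castLT_castSucc]

theorem SPS.face_false_cmp (hG : P.IsCompSys E G) {n : ℕ} (k : Fin (n + 1))
    {x y : P.X (n + 1)} (hxy : P.face k true x = P.face k false y) :
    P.face k false (P.cmp G k x y) = P.face k false x := by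
  rw [SPS.face_cmp_self, (hG.2.1 n k x y hxy).2.1]

theorem SPS.face_true_cmp (hE : P.IsDegSys E) (hG : P.IsCompSys E G) {n : ℕ}
    (k : Fin (n + 1)) {x y : P.X (n + 1)} (hxy : P.face k true x = P.face k false y) :
    P.face k true (P.cmp G k x y) = P.face k true y := by
  rw [SPS.face_cmp_self, (hG.2.1 n k x y hxy).2.2, hE.2.1]

theorem SPS.face_cmp_of_lt (hG : P.IsCompSys E G) {n : ℕ} (k i : Fin (n + 2)) (α : Bool)
    {x y : P.X (n + 2)} (hxy : P.face k true x = P.face k false y) (h : (i : ℕ) < k) :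
    P.face i α (P.cmp G k x y) =
      P.cmp G ⟨(k : ℕ) - 1, by omega⟩ (P.face i α x) (P.face i α y) := by
  have hswap := P.face_face ⟨(k : ℕ) - 1, by omega⟩ ⟨i, by omega⟩ (by simp only; omega) false α
    (G (n + 1) k x y)
  have hk : (⟨(k : ℕ) - 1, by omega⟩ : Fin (n + 2)).succ = k.castSucc := by
    ext; simp only [Fin.val_succ, Fin.val_castSucc]; omega
  simp only [hk, Fin.castLT_mk, Fin.eta] at hswap
  rw [SPS.cmp, ← hswap, hG.2.2.1 n k ⟨i, by omega⟩ α x y hxy h]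
  rfl

theorem SPS.face_cmp_of_gt (hG : P.IsCompSys E G) {n : ℕ} (k i : Fin (n + 2)) (α : Bool)
    {x y : P.X (n + 2)} (hxy : P.face k true x = P.face k false y) (h : (k : ℕ) < i) :
    P.face i α (P.cmp G k x y) =
      P.cmp G ⟨(k : ℕ), by omega⟩ (P.face i α x) (P.face i α y) := by
  rw [SPS.cmp, P.face_face i k.castSucc (by simp only [Fin.val_castSucc]; omega),
    hG.2.2.2 n k i.succ α x y hxy (by simp only [Fin.val_succ]; omega)]
  rfl

end Composite

/-- in a complete stratified precubical set, if the composite `x ∘_k y`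
is defined (`∂_k^+ x = ∂_k^− y`), then `∂_i^α (x ∘_k y) = ∂_i^α x ∘_{k−1} ∂_i^α y` for
`i < k`; `∂_k^− (x ∘_k y) = ∂_k^− x`; `∂_k^+ (x ∘_k y) = ∂_k^+ y`; and
`∂_i^α (x ∘_k y) = ∂_i^α x ∘_k ∂_i^α y` for `i > k`. -/
theorem faces_of_composite (P : SPS)
    (E : ∀ n : ℕ, Fin (n + 1) → P.X n → P.X (n + 1)) (hE : P.IsDegSys E)
    (G : ∀ n : ℕ, Fin (n + 1) → P.X (n + 1) → P.X (n + 1) → P.X (n + 2))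
    (hG : P.IsCompSys E G) :
    (∀ (n : ℕ) (k : Fin (n + 1)) (x y : P.X (n + 1)),
      P.face k true x = P.face k false y →
        P.face k false (P.cmp G k x y) = P.face k false x ∧
        P.face k true (P.cmp G k x y) = P.face k true y) ∧
    (∀ (n : ℕ) (k i : Fin (n + 2)) (α : Bool) (x y : P.X (n + 2)),
      P.face k true x = P.face k false y → ∀ h : (i : ℕ) < (k : ℕ),
      P.face i α (P.cmp G k x y) =
        P.cmp G ⟨(k : ℕ) - 1, by have := k.isLt; omega⟩
          (P.face i α x) (P.face i α y)) ∧
    (∀ (n : ℕ) (k i : Fin (n + 2)) (α : Bool) (x y : P.X (n + 2)),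
      P.face k true x = P.face k false y → ∀ h : (k : ℕ) < (i : ℕ),
      P.face i α (P.cmp G k x y) =
        P.cmp G ⟨(k : ℕ), by have := i.isLt; omega⟩
          (P.face i α x) (P.face i α y)) := by
  refine ⟨fun n k x y hxy => ⟨SPS.face_false_cmp hG k hxy, SPS.face_true_cmp hE hG k hxy⟩,
    fun n k i α x y hxy h => SPS.face_cmp_of_lt hG k i α hxy h,
    fun n k i α x y hxy h => SPS.face_cmp_of_gt hG k i α hxy h⟩

end CubicalNerve
end
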